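/- arXiv:1507.05319 — 2 statements merged into one kernel-verified Lean document; each statement's English description precedes it below -/
import Mathlib

section
/- Let m ≥ 2 be an integer, let U ⊆ ℝ^m be a connected open set, and let C ⊆ ℝ^m be a compact, totally disconnected set. Then U \ C is connected (and, being open, path-connected). In particular, no Cantor set separates a connected open subset of ℝ^m. -/
open Complex Metric Set

noncomputable section




/-- The exterior of a closed ball in ℂ is path connected. -/
lemma extBall_pathConnected (c : ℂ) (δ : ℝ) (hδ : 0 ≤ δ) :
    IsPathConnected ((Metric.closedBall c δ)ᶜ) := by
  have hmem : ∀ z : ℂ, δ < ‖z - c‖ → z ∈ (Metric.closedBall c δ)ᶜ := by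
    intro z hz
    simp only [mem_compl_iff, Metric.mem_closedBall, not_le, dist_eq]
    exact hz
  have habs : ‖((δ + 1 : ℝ) : ℂ)‖ = δ + 1 := by
    rw [Complex.norm_real, Real.norm_eq_abs]; exact abs_of_nonneg (by linarith)
  have hz₀ : (c + ((δ + 1 : ℝ) : ℂ)) ∈ (Metric.closedBall c δ)ᶜ := by
    apply hmem
    have : (c + ((δ + 1 : ℝ) : ℂ)) - c = ((δ + 1 : ℝ) : ℂ) := by ring
    rw [this, habs]; linarith
  refine ⟨c + ((δ + 1 : ℝ) : ℂ), hz₀, ?_⟩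
  intro u hu
  have hu' : δ < ‖u - c‖ := by
    simpa only [mem_compl_iff, Metric.mem_closedBall, not_le, dist_eq] using hu
  have hRpos : 0 < ‖u - c‖ := lt_of_le_of_lt hδ hu'
  set R : ℝ := ‖u - c‖ with hR
  -- first path: radial from u to c + ((δ+1)/R) * (u - c)
  have j1 : JoinedIn ((Metric.closedBall c δ)ᶜ) u (c + (((δ + 1) / R : ℝ) : ℂ) * (u - c)) := by
    refine JoinedIn.ofLine (f := fun t : ℝ =>
        c + ((((1 - t) + t * ((δ + 1) / R)) : ℝ) : ℂ) * (u - c)) ?_ ?_ ?_ ?_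
    · apply Continuous.continuousOn; fun_prop
    · push_cast; ring_nf
    · push_cast; ring_nf
    · rintro z ⟨t, ht, rfl⟩
      obtain ⟨ht0, ht1⟩ := ht
      apply hmem
      have hs : (0:ℝ) ≤ (1 - t) + t * ((δ + 1) / R) := by
        have : 0 ≤ t * ((δ + 1) / R) := by positivity
        nlinarith
      have : (c + ((((1 - t) + t * ((δ + 1) / R)) : ℝ) : ℂ) * (u - c)) - c
          = ((((1 - t) + t * ((δ + 1) / R)) : ℝ) : ℂ) * (u - c) := by ring
      rw [this, norm_mul, Complex.norm_real, Real.norm_eq_abs, _root_.abs_of_nonneg hs, ← hR]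
      have hexp : ((1 - t) + t * ((δ + 1) / R)) * R = (1 - t) * R + t * (δ + 1) := by
        field_simp
      rw [hexp]
      nlinarith [mul_le_mul_of_nonneg_left hu'.le (sub_nonneg.2 ht1),
        mul_le_mul_of_nonneg_left hδ ht0]
  -- second path: arc at radius δ+1 from c + ((δ+1)/R) * (u-c) to c + (δ+1)
  have j2 : JoinedIn ((Metric.closedBall c δ)ᶜ)
      (c + (((δ + 1) / R : ℝ) : ℂ) * (u - c)) (c + ((δ + 1 : ℝ) : ℂ)) := by
    refine JoinedIn.ofLine (f := fun t : ℝ =>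
        c + ((δ + 1 : ℝ) : ℂ) * Complex.exp ((((1 - t) * Complex.arg (u - c) : ℝ)) * Complex.I))
        ?_ ?_ ?_ ?_
    · apply Continuous.continuousOn
      apply Continuous.add continuous_const
      apply Continuous.mul continuous_const
      apply Continuous.cexp
      fun_prop
    · have harg : ((‖u - c‖ : ℝ) : ℂ) * Complex.exp (Complex.arg (u - c) * Complex.I)
          = u - c := Complex.norm_mul_exp_arg_mul_I (u - c)
      have hR0 : ((R : ℝ) : ℂ) ≠ 0 := by
        simp only [ne_eq, Complex.ofReal_eq_zero]; exact ne_of_gt hRpos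
      simp only [sub_zero, one_mul]

      have : Complex.exp ((Complex.arg (u - c) : ℝ) * Complex.I) = (u - c) / ((R : ℝ) : ℂ) := by
        rw [eq_div_iff hR0, mul_comm]
        exact_mod_cast harg
      rw [this]
      field_simp
      have hq : (((δ + 1) / R : ℝ) : ℂ) * (R : ℂ) = ((δ + 1 : ℝ) : ℂ) := by
        rw [← Complex.ofReal_mul, div_mul_cancel₀ _ (ne_of_gt hRpos)]
      linear_combination -(u - c) * hq
    · norm_num
    · rintro z ⟨t, _, rfl⟩
      apply hmem
      have : (c + ((δ + 1 : ℝ) : ℂ) * Complex.exp ((((1 - t) * Complex.arg (u - c) : ℝ)) * Complex.I)) - c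
          = ((δ + 1 : ℝ) : ℂ) * Complex.exp ((((1 - t) * Complex.arg (u - c) : ℝ)) * Complex.I) := by
        ring
      rw [this, norm_mul, habs, Complex.norm_exp_ofReal_mul_I]
      linarith
  exact (j1.trans j2).symm





/-- If `F : [0,1] × K → ℂ*` is continuous, `K` compact, and `F 0` admits a continuous
logarithm on `K`, then so does `F 1`. -/
lemma stepwise_log {K : Set ℂ} (hK : IsCompact K) (F : ℝ → ℂ → ℂ)
    (hF : ContinuousOn (fun p : ℝ × ℂ => F p.1 p.2) (Set.Icc 0 1 ×ˢ K))
    (hne : ∀ t ∈ Set.Icc (0:ℝ) 1, ∀ z ∈ K, F t z ≠ 0)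
    (h0 : ∃ g : ℂ → ℂ, ContinuousOn g K ∧ ∀ z ∈ K, Complex.exp (g z) = F 0 z) :
    ∃ g : ℂ → ℂ, ContinuousOn g K ∧ ∀ z ∈ K, Complex.exp (g z) = F 1 z := by
  rcases K.eq_empty_or_nonempty with rfl | hKne
  · exact ⟨0, continuousOn_empty _, fun z hz => absurd hz (notMem_empty z)⟩
  -- the compact product set
  have hprod : IsCompact (Set.Icc (0:ℝ) 1 ×ˢ K) := isCompact_Icc.prod hK
  have hprodne : (Set.Icc (0:ℝ) 1 ×ˢ K).Nonempty := ⟨(0, hKne.choose), by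
    constructor
    · exact ⟨le_refl 0, zero_le_one⟩
    · exact hKne.choose_spec⟩
  -- minimum modulus
  obtain ⟨p₀, hp₀mem, hp₀min⟩ := hprod.exists_isMinOn hprodne
    (continuous_norm.comp_continuousOn hF)
  set m : ℝ := ‖F p₀.1 p₀.2‖ with hm
  have hmpos : 0 < m := by
    rw [hm]
    exact norm_pos_iff.mpr (hne p₀.1 hp₀mem.1 p₀.2 hp₀mem.2)
  have hmle : ∀ t ∈ Set.Icc (0:ℝ) 1, ∀ z ∈ K, m ≤ ‖F t z‖ := by
    intro t ht z hz
    exact hp₀min (Set.mk_mem_prod ht hz)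
  -- uniform continuity
  have huc := hprod.uniformContinuousOn_of_continuous hF
  rw [Metric.uniformContinuousOn_iff] at huc
  obtain ⟨δ, hδpos, hδ⟩ := huc m hmpos
  obtain ⟨n, hn⟩ := exists_nat_gt (1 / δ)
  have hnpos : 0 < n := by
    by_contra h
    push_neg at h
    interval_cases n
    simp at hn
    linarith [one_div_pos.mpr hδpos, hn]
  have hnR : 0 < (n:ℝ) := by exact_mod_cast hnpos
  have hstep : (1:ℝ)/n < δ := by
    rw [div_lt_iff₀ hnR]
    rw [div_lt_iff₀ hδpos] at hn
    linarith [hn]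
  -- key induction
  have main : ∀ k : ℕ, k ≤ n → ∃ g : ℂ → ℂ, ContinuousOn g K ∧
      ∀ z ∈ K, Complex.exp (g z) = F ((k:ℝ)/n) z := by
    intro k
    induction k with
    | zero =>
      intro _
      simpa using h0
    | succ k ih =>
      intro hk1
      obtain ⟨g, hg, hge⟩ := ih (le_trans (Nat.le_succ k) hk1)
      have hkmem : ((k:ℝ)/n) ∈ Set.Icc (0:ℝ) 1 := by
        constructor
        · positivity
        · rw [div_le_one hnR]; exact_mod_cast le_trans (Nat.le_succ k) hk1
      have hk1mem : (((k+1:ℕ):ℝ)/n) ∈ Set.Icc (0:ℝ) 1 := by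
        constructor
        · positivity
        · rw [div_le_one hnR]; exact_mod_cast hk1
      -- continuity of z ↦ F t z on K for fixed t
      have hcont : ∀ t ∈ Set.Icc (0:ℝ) 1, ContinuousOn (fun z => F t z) K := by
        intro t ht
        have : ContinuousOn (fun z : ℂ => ((t, z) : ℝ × ℂ)) K :=
          (Continuous.prodMk_right t).continuousOn
        exact hF.comp this (fun z hz => Set.mk_mem_prod ht hz)
      -- the ratio
      set q : ℂ → ℂ := fun z => F (((k+1:ℕ):ℝ)/n) z / F ((k:ℝ)/n) z with hq
      have hqnear : ∀ z ∈ K, ‖q z - 1‖ < 1 := by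
        intro z hz
        have hd : dist ((((k+1:ℕ):ℝ)/n, z) : ℝ × ℂ) (((k:ℝ)/n, z) : ℝ × ℂ) < δ := by
          rw [Prod.dist_eq]
          simp only [dist_self]
          rw [max_eq_left dist_nonneg, Real.dist_eq]
          have he : ((k+1:ℕ):ℝ)/n - (k:ℝ)/n = 1/n := by push_cast; ring
          rw [he, abs_of_pos (by positivity)]
          exact hstep
        have hFd := hδ _ (Set.mk_mem_prod hk1mem hz) _ (Set.mk_mem_prod hkmem hz) hd
        have hne1 : F ((k:ℝ)/n) z ≠ 0 := hne _ hkmem z hz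
        have : q z - 1 = (F (((k+1:ℕ):ℝ)/n) z - F ((k:ℝ)/n) z) / F ((k:ℝ)/n) z := by
          rw [hq]; field_simp
        rw [this, norm_div]
        rw [div_lt_one (norm_pos_iff.mpr hne1)]
        calc ‖F (((k+1:ℕ):ℝ)/n) z - F ((k:ℝ)/n) z‖
            = dist (F (((k+1:ℕ):ℝ)/n) z) (F ((k:ℝ)/n) z) := by rw [Complex.dist_eq]
          _ < m := hFd
          _ ≤ ‖F ((k:ℝ)/n) z‖ := hmle _ hkmem z hz
      have hqcont : ContinuousOn q K :=
        (hcont _ hk1mem).div (hcont _ hkmem) (fun z hz => hne _ hkmem z hz)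
      have hqslit : ∀ z ∈ K, q z ∈ Complex.slitPlane := by
        intro z hz
        left
        have h1 := hqnear z hz
        have h2 : |(q z - 1).re| ≤ ‖q z - 1‖ := Complex.abs_re_le_norm _
        have h3 : (q z - 1).re = (q z).re - 1 := by simp
        rw [h3] at h2
        have h4 := abs_lt.mp (lt_of_le_of_lt h2 h1)
        linarith [h4.1]
      refine ⟨fun z => g z + Complex.log (q z), hg.add (hqcont.clog hqslit), ?_⟩
      intro z hz
      have hqne : q z ≠ 0 := by
        intro h
        have := hqnear z hz
        rw [h] at this
        simp at this
      rw [Complex.exp_add, hge z hz, Complex.exp_log hqne, hq]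
      field_simp
      rw [mul_comm, mul_div_assoc, div_self (hne _ hkmem z hz), mul_one]
  obtain ⟨g, hg, hge⟩ := main n (le_refl n)
  refine ⟨g, hg, ?_⟩
  intro z hz
  rw [hge z hz, div_self (ne_of_gt hnR)]





/-- Easy direction of the Eilenberg criterion: if `a` and `b` are joined in the complement
of the compact set `K`, then `(z-a)/(z-b)` has a continuous logarithm on `K`. -/
lemma log_of_joined {K : Set ℂ} (hK : IsCompact K) {a b : ℂ}
    (h : JoinedIn Kᶜ a b) :
    ∃ g : ℂ → ℂ, ContinuousOn g K ∧ ∀ z ∈ K, Complex.exp (g z) = (z - a) / (z - b) := by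
  obtain ⟨γ, hγ⟩ := h.symm   -- path from b to a in Kᶜ
  have hbK : b ∉ K := by have := hγ 0; simpa using this
  have haK : a ∉ K := by have := hγ 1; simpa using this
  have hKz : ∀ z ∈ K, ∀ t ∈ Set.Icc (0:ℝ) 1, z - γ.extend t ≠ 0 := by
    intro z hz t ht
    have : γ.extend t ∈ Kᶜ := by
      rw [γ.extend_apply ht]
      exact hγ _
    intro hzero
    rw [sub_eq_zero] at hzero
    exact this (hzero ▸ hz)
  have goal1 : ∃ g : ℂ → ℂ, ContinuousOn g K ∧
      ∀ z ∈ K, Complex.exp (g z) = (z - γ.extend 1) / (z - b) := by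
    apply stepwise_log hK (fun t z => (z - γ.extend t) / (z - b))
    · apply ContinuousOn.div
      · exact (continuous_snd.sub (γ.continuous_extend.comp continuous_fst)).continuousOn
      · exact (continuous_snd.sub continuous_const).continuousOn
      · rintro ⟨t, z⟩ ⟨ht, hz⟩
        simp only
        intro hzero
        rw [sub_eq_zero] at hzero
        exact hbK (hzero ▸ hz)
    · intro t ht z hz
      apply div_ne_zero (hKz z hz t ht)
      intro hzero
      rw [sub_eq_zero] at hzero
      exact hbK (hzero ▸ hz)
    · refine ⟨fun _ => 0, continuousOn_const, fun z hz => ?_⟩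
      simp only
      rw [Complex.exp_zero, γ.extend_zero]
      rw [div_self]
      intro hzero
      rw [sub_eq_zero] at hzero
      exact hbK (hzero ▸ hz)
  rwa [γ.extend_one] at goal1

/-- A nonvanishing continuous function on a closed ball admits a continuous logarithm. -/
lemma log_on_closedBall {a : ℂ} {R : ℝ} (hR : 0 ≤ R) {Ψ : ℂ → ℂ}
    (hΨ : ContinuousOn Ψ (Metric.closedBall a R))
    (hne : ∀ z ∈ Metric.closedBall a R, Ψ z ≠ 0) :
    ∃ g : ℂ → ℂ, ContinuousOn g (Metric.closedBall a R) ∧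
      ∀ z ∈ Metric.closedBall a R, Complex.exp (g z) = Ψ z := by
  have hmaps : ∀ t ∈ Set.Icc (0:ℝ) 1, ∀ z ∈ Metric.closedBall a R,
      a + (t:ℂ) * (z - a) ∈ Metric.closedBall a R := by
    intro t ht z hz
    rw [Metric.mem_closedBall, dist_eq] at hz ⊢
    have : a + (t:ℂ) * (z - a) - a = (t:ℂ) * (z - a) := by ring
    rw [this, norm_mul, Complex.norm_real, Real.norm_eq_abs, _root_.abs_of_nonneg ht.1]
    calc t * ‖z - a‖ ≤ 1 * ‖z - a‖ := by
          apply mul_le_mul_of_nonneg_right ht.2 (norm_nonneg _)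
      _ = ‖z - a‖ := one_mul _
      _ ≤ R := hz
  have key := stepwise_log (isCompact_closedBall a R)
    (fun t z => Ψ (a + (t:ℂ) * (z - a)))
    (by
      apply hΨ.comp
      · apply Continuous.continuousOn
        fun_prop
      · rintro ⟨t, z⟩ ⟨ht, hz⟩
        exact hmaps t ht z hz)
    (fun t ht z hz => hne _ (hmaps t ht z hz))
    (by
      refine ⟨fun _ => Complex.log (Ψ a), continuousOn_const, fun z hz => ?_⟩
      have ha : a ∈ Metric.closedBall a R := Metric.mem_closedBall_self hR
      simp only [Complex.ofReal_zero, zero_mul, add_zero]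
      exact Complex.exp_log (hne a ha))
  obtain ⟨g, hg, hge⟩ := key
  refine ⟨g, hg, fun z hz => ?_⟩
  have := hge z hz
  simpa using this





lemma two_pi_I_ne_zero' : (2 * (Real.pi:ℂ) * Complex.I) ≠ 0 := by
  intro h
  rcases mul_eq_zero.mp h with h1 | h2
  · rcases mul_eq_zero.mp h1 with h3 | h4
    · norm_num at h3
    · exact Real.pi_ne_zero (by exact_mod_cast h4)
  · exact Complex.I_ne_zero h2

lemma no_sep_of_log_aux {K : Set ℂ} (hK : IsCompact K) {a b : ℂ} (ha : a ∉ K) (hb : b ∉ K)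
    (hnb : b ∉ connectedComponentIn Kᶜ a)
    {R₁ : ℝ} (hbound : connectedComponentIn Kᶜ a ⊆ Metric.closedBall 0 R₁)
    {g : ℂ → ℂ} (hg : ContinuousOn g K)
    (hge : ∀ z ∈ K, Complex.exp (g z) = (z - a) / (z - b)) : False := by
  classical
  set D := connectedComponentIn Kᶜ a with hDdef
  have haD : a ∈ D := mem_connectedComponentIn (Set.mem_compl ha)
  have hDsub : D ⊆ Kᶜ := connectedComponentIn_subset _ _
  have hDopen : IsOpen D := hK.isClosed.isOpen_compl.connectedComponentIn
  -- frontier of D is inside K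
  have hfr : frontier D ⊆ K := by
    intro w hw
    by_contra hwK
    obtain ⟨ρ, hρpos, hball⟩ := Metric.isOpen_iff.mp hK.isClosed.isOpen_compl w
      (Set.mem_compl hwK)
    have hwcl : w ∈ closure D := hw.1
    obtain ⟨d, hdD, hdball⟩ := Metric.mem_closure_iff.mp hwcl ρ hρpos
    have hballD : Metric.ball w ρ ⊆ D := by
      have hconn : IsPreconnected (Metric.ball w ρ) := (convex_ball w ρ).isPreconnected
      have h1 : Metric.ball w ρ ⊆ connectedComponentIn Kᶜ d := by
        apply hconn.subset_connectedComponentIn _ hball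
        rw [Metric.mem_ball]
        rwa [dist_comm]
      rwa [← connectedComponentIn_eq hdD] at h1
    have hwD : w ∈ D := hballD (Metric.mem_ball_self hρpos)
    rw [hDopen.frontier_eq] at hw
    exact hw.2 hwD
  have hbcl : b ∉ closure D := by
    intro hbc
    by_cases hbD : b ∈ D
    · exact hnb hbD
    · exact hb (hfr ⟨hbc, by rwa [hDopen.interior_eq]⟩)
  have hacl : a ∈ closure D := subset_closure haD
  -- Tietze extension of g
  obtain ⟨gext, hgext⟩ := ContinuousMap.exists_restrict_eq (Y := ℂ) hK.isClosed
    ⟨K.restrict g, hg.restrict⟩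
  have hgeq : ∀ z ∈ K, gext z = g z := by
    intro z hz
    exact ContinuousMap.congr_fun hgext ⟨z, hz⟩
  set Φ : ℂ → ℂ := fun z => (z - b) * Complex.exp (gext z) with hΦdef
  have hΦK : ∀ z ∈ K, Φ z = z - a := by
    intro z hz
    have hzb : z - b ≠ 0 := by
      intro h0; rw [sub_eq_zero] at h0; exact hb (h0 ▸ hz)
    rw [hΦdef]
    simp only
    rw [hgeq z hz, hge z hz]
    field_simp
  set Ψ : ℂ → ℂ := (closure D).piecewise Φ (fun z => z - a) with hΨdef
  have hΨcont : Continuous Ψ := by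
    apply Continuous.piecewise
    · intro w hw
      have : w ∈ K := hfr (frontier_closure_subset hw)
      exact hΦK w this
    · exact (continuous_id.sub continuous_const).mul (Continuous.cexp gext.continuous)
    · exact continuous_id.sub continuous_const
  have hΨne : ∀ z, Ψ z ≠ 0 := by
    intro z
    by_cases hz : z ∈ closure D
    · rw [hΨdef, Set.piecewise_eq_of_mem _ _ _ hz]
      intro h0
      have h0' : (z - b) * Complex.exp (gext z) = 0 := h0
      rcases mul_eq_zero.mp h0' with h1 | h2
      · rw [sub_eq_zero] at h1
        exact hbcl (h1 ▸ hz)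
      · exact Complex.exp_ne_zero _ h2
    · rw [hΨdef, Set.piecewise_eq_of_notMem _ _ _ hz]
      intro h0
      rw [sub_eq_zero] at h0
      exact hz (h0 ▸ hacl)
  -- radius
  have hR₁ : ‖a‖ ≤ R₁ := by
    have := hbound haD
    rwa [Metric.mem_closedBall, Complex.dist_eq, sub_zero] at this
  have habs0 : (0:ℝ) ≤ ‖a‖ := norm_nonneg _
  set R : ℝ := R₁ + ‖a‖ + 1 with hRdef
  have hRpos : 0 < R := by rw [hRdef]; linarith
  have hclosureD : closure D ⊆ Metric.closedBall 0 R₁ :=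
    closure_minimal hbound Metric.isClosed_closedBall
  have hsphere : ∀ z : ℂ, ‖z - a‖ = R → z ∉ closure D := by
    intro z hzR hzD
    have h1 : ‖z‖ ≤ R₁ := by
      have := hclosureD hzD
      rwa [Metric.mem_closedBall, Complex.dist_eq, sub_zero] at this
    have h2 : ‖z - a‖ ≤ ‖z‖ + ‖a‖ := by
      have := norm_sub_le z a
      simpa using this
    rw [hzR, hRdef] at h2
    linarith
  have hΨsphere : ∀ z : ℂ, ‖z - a‖ = R → Ψ z = z - a := by
    intro z hzR
    rw [hΨdef, Set.piecewise_eq_of_notMem _ _ _ (hsphere z hzR)]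
  -- continuous log on the closed ball
  obtain ⟨L, hL, hLexp⟩ := log_on_closedBall hRpos.le hΨcont.continuousOn
    (fun z _ => hΨne z)
  -- the circle loop
  set γ : ℝ → ℂ := fun t => a + (R:ℂ) * Complex.exp ((t:ℂ) * (2 * Real.pi * Complex.I))
    with hγdef
  have hγabs : ∀ t : ℝ, ‖γ t - a‖ = R := by
    intro t
    rw [hγdef]
    simp only
    have h1 : a + (R:ℂ) * Complex.exp ((t:ℂ) * (2 * Real.pi * Complex.I)) - a
        = (R:ℂ) * Complex.exp ((t:ℂ) * (2 * Real.pi * Complex.I)) := by ring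
    rw [h1, norm_mul, Complex.norm_real, Real.norm_eq_abs, abs_of_pos hRpos, Complex.norm_exp]
    have h2 : ((t:ℂ) * (2 * Real.pi * Complex.I)).re = 0 := by
      simp [Complex.mul_re, Complex.mul_im]
    rw [h2, Real.exp_zero, mul_one]
  have hγmem : ∀ t : ℝ, γ t ∈ Metric.closedBall a R := by
    intro t
    rw [Metric.mem_closedBall, Complex.dist_eq, hγabs t]
  have hγΨ : ∀ t : ℝ, Complex.exp (L (γ t)) = γ t - a := by
    intro t
    rw [hLexp (γ t) (hγmem t), hΨsphere (γ t) (hγabs t)]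
  -- integer-valued function
  set k : ℝ → ℝ := fun t =>
    ((L (γ t) - (Real.log R : ℂ) - (t:ℂ) * (2 * Real.pi * Complex.I)) /
      (2 * Real.pi * Complex.I)).re with hkdef
  have hkint : ∀ t : ℝ, ∃ n : ℤ, k t = n := by
    intro t
    have hexp1 : Complex.exp (L (γ t) - (Real.log R : ℂ) - (t:ℂ) * (2 * Real.pi * Complex.I))
        = 1 := by
      rw [Complex.exp_sub, Complex.exp_sub, hγΨ t]
      have hlogR : Complex.exp ((Real.log R : ℂ)) = (R:ℂ) := by
        rw [← Complex.ofReal_exp, Real.exp_log hRpos]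
      rw [hlogR, hγdef]
      simp only
      have hRne : (R:ℂ) ≠ 0 := by
        simp only [ne_eq, Complex.ofReal_eq_zero]
        exact ne_of_gt hRpos
      have hexpne : Complex.exp ((t:ℂ) * (2 * Real.pi * Complex.I)) ≠ 0 :=
        Complex.exp_ne_zero _
      field_simp
      ring
    rw [Complex.exp_eq_one_iff] at hexp1
    obtain ⟨n, hn⟩ := hexp1
    refine ⟨n, ?_⟩
    rw [hkdef]
    simp only
    rw [hn, mul_div_assoc]
    rw [div_self two_pi_I_ne_zero']
    simp
  have hγcont : Continuous γ := by
    rw [hγdef]; fun_prop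
  have hkcont : ContinuousOn k (Set.Icc 0 1) := by
    apply Complex.continuous_re.comp_continuousOn
    apply ContinuousOn.div_const
    apply ContinuousOn.sub
    apply ContinuousOn.sub
    · exact hL.comp hγcont.continuousOn (fun t _ => hγmem t)
    · exact continuousOn_const
    · exact (Continuous.continuousOn (by fun_prop))
  have hγeq : γ 1 = γ 0 := by
    rw [hγdef]
    simp only
    rw [show ((1:ℝ):ℂ) * (2 * Real.pi * Complex.I) = 2 * Real.pi * Complex.I by push_cast; ring]
    rw [show ((0:ℝ):ℂ) * (2 * Real.pi * Complex.I) = 0 by push_cast; ring]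
    rw [Complex.exp_zero]
    rw [show (2:ℂ) * Real.pi * Complex.I = 2 * ↑Real.pi * Complex.I by ring]
    rw [Complex.exp_two_pi_mul_I]
  have hk10 : k 1 = k 0 - 1 := by
    rw [hkdef]
    simp only
    rw [hγeq]
    have harith : ∀ W : ℂ, (W - ((1:ℝ):ℂ) * (2 * Real.pi * Complex.I)) /
        (2 * Real.pi * Complex.I)
        = (W - ((0:ℝ):ℂ) * (2 * Real.pi * Complex.I)) / (2 * Real.pi * Complex.I) - 1 := by
      intro W
      rw [eq_sub_iff_add_eq, div_add' _ _ _ two_pi_I_ne_zero']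
      congr 1
      push_cast
      ring
    rw [harith (L (γ 0) - (Real.log R : ℂ)), Complex.sub_re, Complex.one_re]
  -- contradiction via IVT
  obtain ⟨n₀, hn₀⟩ := hkint 0
  obtain ⟨n₁, hn₁⟩ := hkint 1
  have hval : ((n₀:ℝ) - 1/2) ∈ Set.Icc (k 1) (k 0) := by
    constructor
    · rw [hk10, hn₀]; linarith
    · rw [hn₀]; linarith
  have := intermediate_value_Icc' (zero_le_one) hkcont hval
  obtain ⟨t, _, hkt⟩ := this
  obtain ⟨nt, hnt⟩ := hkint t
  rw [hnt] at hkt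
  have : (2 * nt : ℤ) = 2 * n₀ - 1 := by
    have h2 : 2 * (nt:ℝ) = 2 * (n₀:ℝ) - 1 := by rw [hkt]; ring
    exact_mod_cast h2
  omega

/-- Hard direction of the Eilenberg criterion. -/
lemma same_comp_of_log {K : Set ℂ} (hK : IsCompact K) {a b : ℂ} (ha : a ∉ K) (hb : b ∉ K)
    {g : ℂ → ℂ} (hg : ContinuousOn g K)
    (hge : ∀ z ∈ K, Complex.exp (g z) = (z - a) / (z - b)) :
    b ∈ connectedComponentIn Kᶜ a := by
  by_contra hnb
  obtain ⟨R₀', hR₀'⟩ := hK.isBounded.subset_closedBall 0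
  set R₀ : ℝ := max R₀' 0 with hR₀def
  have hR₀ : K ⊆ Metric.closedBall 0 R₀ :=
    hR₀'.trans (Metric.closedBall_subset_closedBall (le_max_left _ _))
  have hR₀nonneg : (0:ℝ) ≤ R₀ := le_max_right _ _
  have hextK : (Metric.closedBall (0:ℂ) R₀)ᶜ ⊆ Kᶜ := compl_subset_compl.mpr hR₀
  have hextconn : IsPreconnected ((Metric.closedBall (0:ℂ) R₀)ᶜ) :=
    (extBall_pathConnected 0 R₀ hR₀nonneg).isConnected.isPreconnected
  -- dichotomy for a component
  have dichotomy : ∀ x : ℂ, x ∉ K →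
      connectedComponentIn Kᶜ x ⊆ Metric.closedBall 0 R₀ ∨
      (Metric.closedBall (0:ℂ) R₀)ᶜ ⊆ connectedComponentIn Kᶜ x := by
    intro x hx
    by_cases hint : (connectedComponentIn Kᶜ x ∩ (Metric.closedBall (0:ℂ) R₀)ᶜ).Nonempty
    · right
      obtain ⟨w, hw1, hw2⟩ := hint
      have h1 : (Metric.closedBall (0:ℂ) R₀)ᶜ ⊆ connectedComponentIn Kᶜ w :=
        hextconn.subset_connectedComponentIn hw2 hextK
      rwa [← connectedComponentIn_eq hw1] at h1
    · left
      intro z hz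
      by_contra hzball
      exact hint ⟨z, hz, hzball⟩
  rcases dichotomy a ha with hcase | hcase
  · exact no_sep_of_log_aux hK ha hb hnb hcase hg hge
  · -- comp(a) is the unbounded one; comp(b) must be bounded
    have hdisj : ∀ w : ℂ, w ∈ connectedComponentIn Kᶜ b → w ∉ connectedComponentIn Kᶜ a := by
      intro w hwb hwa
      have h1 : connectedComponentIn Kᶜ a = connectedComponentIn Kᶜ w :=
        connectedComponentIn_eq hwa
      have h2 : connectedComponentIn Kᶜ b = connectedComponentIn Kᶜ w :=
        connectedComponentIn_eq hwb
      rw [← h2] at h1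
      exact hnb (h1 ▸ mem_connectedComponentIn (Set.mem_compl hb))
  -- now comp(b) ⊆ closedBall
    have hbbound : connectedComponentIn Kᶜ b ⊆ Metric.closedBall 0 R₀ := by
      intro z hz
      by_contra hzball
      exact hdisj z hz (hcase hzball)
    have hna : a ∉ connectedComponentIn Kᶜ b := by
      intro hab
      have h1 : connectedComponentIn Kᶜ b = connectedComponentIn Kᶜ a :=
        connectedComponentIn_eq hab
      exact hnb (h1 ▸ mem_connectedComponentIn (Set.mem_compl hb))
    apply no_sep_of_log_aux hK hb ha hna hbbound (g := fun z => -(g z)) (hg.neg)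
    intro z hz
    rw [Complex.exp_neg, hge z hz]
    have hza : z - a ≠ 0 := by
      intro h0; rw [sub_eq_zero] at h0; exact ha (h0 ▸ hz)
    have hzb : z - b ≠ 0 := by
      intro h0; rw [sub_eq_zero] at h0; exact hb (h0 ▸ hz)
    rw [inv_div]





/-- `a` and `b` lie in a common preconnected subset of `Kᶜ`. -/
def SameComp (K : Set ℂ) (a b : ℂ) : Prop :=
  ∃ W : Set ℂ, IsPreconnected W ∧ W ⊆ Kᶜ ∧ a ∈ W ∧ b ∈ W

lemma SameComp.not_mem_left {K : Set ℂ} {a b : ℂ} (h : SameComp K a b) : a ∉ K := by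
  obtain ⟨W, _, hWK, haW, _⟩ := h
  exact hWK haW

lemma SameComp.not_mem_right {K : Set ℂ} {a b : ℂ} (h : SameComp K a b) : b ∉ K := by
  obtain ⟨W, _, hWK, _, hbW⟩ := h
  exact hWK hbW

lemma SameComp.joinedIn {K : Set ℂ} (hK : IsCompact K) {a b : ℂ} (h : SameComp K a b) :
    JoinedIn Kᶜ a b := by
  obtain ⟨W, hW, hWK, haW, hbW⟩ := h
  have haK : a ∈ Kᶜ := hWK haW
  set D := connectedComponentIn Kᶜ a with hD
  have hWD : W ⊆ D := hW.subset_connectedComponentIn haW hWK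
  have hDopen : IsOpen D := hK.isClosed.isOpen_compl.connectedComponentIn
  have hDconn : IsConnected D := by
    rw [isConnected_connectedComponentIn_iff]
    exact haK
  have hDpath : IsPathConnected D := by
    rw [← hDopen.isConnected_iff_isPathConnected]
    exact hDconn
  have := hDpath.joinedIn a (mem_connectedComponentIn haK) b (hWD hbW)
  exact this.mono (connectedComponentIn_subset _ _)

lemma sameComp_of_mem_component {K : Set ℂ} {a b : ℂ} (ha : a ∉ K)
    (h : b ∈ connectedComponentIn Kᶜ a) : SameComp K a b :=
  ⟨connectedComponentIn Kᶜ a, isPreconnected_connectedComponentIn,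
    connectedComponentIn_subset _ _, mem_connectedComponentIn (Set.mem_compl ha), h⟩

/-- Janiszewski's theorem for disjoint compact sets. -/
lemma janiszewski_disjoint {A B : Set ℂ} (hA : IsCompact A) (hB : IsCompact B)
    (hAB : Disjoint A B) {a b : ℂ}
    (h1 : SameComp A a b) (h2 : SameComp B a b) : SameComp (A ∪ B) a b := by
  classical
  have haA := h1.not_mem_left
  have hbA := h1.not_mem_right
  have haB := h2.not_mem_left
  have hbB := h2.not_mem_right
  obtain ⟨gA, hgA, hgAe⟩ := log_of_joined hA (h1.joinedIn hA)
  obtain ⟨gB, hgB, hgBe⟩ := log_of_joined hB (h2.joinedIn hB)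
  set g : ℂ → ℂ := fun z => if z ∈ A then gA z else gB z with hgdef
  have key : ∀ (x : ℂ), ∀ (C D : Set ℂ), x ∈ C → IsClosed D → x ∉ D →
      (∀ gC : ℂ → ℂ, ContinuousOn gC C →
        (∀ z ∈ C ∪ D, (z ∈ C → g z = gC z)) → g x = gC x →
        ContinuousWithinAt g (C ∪ D) x) := by
    intro x C D hxC hD hxD gC hgC hloc hgx
    obtain ⟨ε, hεpos, hball⟩ := Metric.isOpen_iff.mp hD.isOpen_compl x (Set.mem_compl hxD)
    have hsub : Metric.ball x ε ∩ (C ∪ D) ⊆ C := by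
      rintro z ⟨hz3, hz1 | hz2⟩
      · exact hz1
      · exact absurd hz2 (hball hz3)
    have hCWA : ContinuousWithinAt gC (C ∪ D) x := by
      apply (hgC x hxC).mono_of_mem_nhdsWithin
      apply mem_nhdsWithin.mpr
      exact ⟨Metric.ball x ε, Metric.isOpen_ball, Metric.mem_ball_self hεpos, hsub⟩
    apply hCWA.congr_of_eventuallyEq _ hgx
    have hmem : Metric.ball x ε ∩ (C ∪ D) ∈ nhdsWithin x (C ∪ D) :=
      Filter.inter_mem (mem_nhdsWithin_of_mem_nhds (Metric.ball_mem_nhds x hεpos))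
        self_mem_nhdsWithin
    apply Filter.eventuallyEq_of_mem hmem
    intro z hz
    exact hloc z hz.2 (hsub hz)
  have hgcont : ContinuousOn g (A ∪ B) := by
    intro x hx
    rcases hx with hxA | hxB
    · have hxB' : x ∉ B := fun h => (hAB.ne_of_mem hxA h) rfl
      apply key x A B hxA hB.isClosed hxB' gA hgA
      · intro z _ hzA
        rw [hgdef]
        simp only [if_pos hzA]
      · rw [hgdef]
        simp only [if_pos hxA]
    · have hxA' : x ∉ A := fun h => (hAB.ne_of_mem h hxB) rfl
      have hrw : A ∪ B = B ∪ A := Set.union_comm A B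
      rw [hrw]
      apply key x B A hxB hA.isClosed hxA' gB hgB
      · intro z _ hzB
        have hzA : z ∉ A := fun h => (hAB.ne_of_mem h hzB) rfl
        rw [hgdef]
        simp only [if_neg hzA]
      · rw [hgdef]
        simp only [if_neg hxA']
  have hge : ∀ z ∈ A ∪ B, Complex.exp (g z) = (z - a) / (z - b) := by
    intro z hz
    rcases hz with hzA | hzB
    · rw [hgdef]; simp only [if_pos hzA]; exact hgAe z hzA
    · have hzA : z ∉ A := fun h => (hAB.ne_of_mem h hzB) rfl
      rw [hgdef]; simp only [if_neg hzA]; exact hgBe z hzB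
  have haAB : a ∉ A ∪ B := by rintro (h | h); exacts [haA h, haB h]
  have hbAB : b ∉ A ∪ B := by rintro (h | h); exacts [hbA h, hbB h]
  exact sameComp_of_mem_component haAB
    (same_comp_of_log (hA.union hB) haAB hbAB hgcont hge)

lemma foldr_union_compact : ∀ (l : List (Set ℂ)), (∀ K ∈ l, IsCompact K) →
    IsCompact (l.foldr (· ∪ ·) ∅) := by
  intro l
  induction l with
  | nil => intro _; simpa using isCompact_empty
  | cons K l ih =>
    intro h
    simp only [List.foldr_cons]
    exact (h K (List.mem_cons_self)).union (ih (fun K' h' => h K' (List.mem_cons_of_mem _ h')))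

lemma foldr_union_disjoint : ∀ (l : List (Set ℂ)) (K : Set ℂ), (∀ K' ∈ l, Disjoint K K') →
    Disjoint K (l.foldr (· ∪ ·) ∅) := by
  intro l
  induction l with
  | nil => intro K _; simp
  | cons K' l ih =>
    intro K h
    simp only [List.foldr_cons]
    rw [Set.disjoint_union_right]
    exact ⟨h K' (List.mem_cons_self), ih K (fun K'' h' => h K'' (List.mem_cons_of_mem _ h'))⟩

/-- Iterated Janiszewski for a finite list of pairwise disjoint compact sets. -/
lemma janiszewski_list : ∀ (l : List (Set ℂ)), l.Pairwise Disjoint →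
    (∀ K ∈ l, IsCompact K) → ∀ a b : ℂ, (∀ K ∈ l, SameComp K a b) →
    SameComp (l.foldr (· ∪ ·) ∅) a b := by
  intro l
  induction l with
  | nil =>
    intro _ _ a b _
    exact ⟨Set.univ, isPreconnected_univ, by simp, Set.mem_univ a, Set.mem_univ b⟩
  | cons K l ih =>
    intro hpw hcomp a b hsc
    have hpc := List.pairwise_cons.mp hpw
    have hdisj : Disjoint K (l.foldr (· ∪ ·) ∅) := foldr_union_disjoint l K hpc.1
    have hcompl : IsCompact (l.foldr (· ∪ ·) ∅) :=
      foldr_union_compact l (fun K' h' => hcomp K' (List.mem_cons_of_mem _ h'))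
    have h2 : SameComp (l.foldr (· ∪ ·) ∅) a b :=
      ih hpc.2 (fun K' h' => hcomp K' (List.mem_cons_of_mem _ h')) a b
        (fun K' h' => hsc K' (List.mem_cons_of_mem _ h'))
    simp only [List.foldr_cons]
    exact janiszewski_disjoint (hcomp K (List.mem_cons_self)) hcompl hdisj
      (hsc K (List.mem_cons_self)) h2





lemma mem_foldr_union {l : List (Set ℂ)} {z : ℂ} :
    z ∈ l.foldr (· ∪ ·) ∅ ↔ ∃ K ∈ l, z ∈ K := by
  induction l with
  | nil => simp
  | cons K t ih =>
    simp only [List.foldr_cons, Set.mem_union, ih, List.mem_cons]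
    constructor
    · rintro (h | ⟨K', h1, h2⟩)
      · exact ⟨K, Or.inl rfl, h⟩
      · exact ⟨K', Or.inr h1, h2⟩
    · rintro ⟨K', (rfl | h1), h2⟩
      · exact Or.inl h2
      · exact Or.inr ⟨K', h1, h2⟩

lemma foldr_union_map_diff (V : Set ℂ) :
    ∀ (l : List (Set ℂ)), (l.map (· \ V)).foldr (· ∪ ·) ∅ = l.foldr (· ∪ ·) ∅ \ V := by
  intro l
  induction l with
  | nil => simp
  | cons K t ih =>
    simp only [List.map_cons, List.foldr_cons, ih, Set.union_diff_distrib]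

lemma disjointify (P : Set ℂ → Prop) (hdiff : ∀ A B, P A → P B → P (A \ B)) :
    ∀ l : List (Set ℂ), (∀ V ∈ l, P V) → ∃ l' : List (Set ℂ), l'.Pairwise Disjoint ∧
      (∀ W ∈ l', P W ∧ ∃ V ∈ l, W ⊆ V) ∧ l'.foldr (· ∪ ·) ∅ = l.foldr (· ∪ ·) ∅ := by
  intro l
  induction l with
  | nil => intro _; exact ⟨[], List.Pairwise.nil, by simp, rfl⟩
  | cons V t ih =>
    intro hP
    obtain ⟨t', hpw, hprop, hun⟩ := ih (fun K h => hP K (List.mem_cons_of_mem _ h))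
    refine ⟨V :: t'.map (· \ V), ?_, ?_, ?_⟩
    · rw [List.pairwise_cons]
      constructor
      · intro W hW
        obtain ⟨W', hW', rfl⟩ := List.mem_map.mp hW
        exact Set.disjoint_sdiff_right
      · exact hpw.map _ (fun A B (hAB : Disjoint A B) =>
          hAB.mono Set.diff_subset Set.diff_subset)
    · intro W hW
      rcases List.mem_cons.mp hW with rfl | hW'
      · exact ⟨hP W (List.mem_cons_self), W, List.mem_cons_self, subset_rfl⟩
      · obtain ⟨W', hW'', rfl⟩ := List.mem_map.mp hW'
        obtain ⟨hPW', V', hV', hsub⟩ := hprop W' hW''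
        exact ⟨hdiff _ _ hPW' (hP V (List.mem_cons_self)),
          V', List.mem_cons_of_mem _ hV', Set.diff_subset.trans hsub⟩
    · simp only [List.foldr_cons, foldr_union_map_diff, hun]
      rw [Set.union_diff_self]

/-- Decomposition of a compact totally disconnected set into finitely many pairwise
disjoint compact relatively clopen pieces of small diameter. -/
lemma clopen_decomposition {C : Set ℂ} (hC : IsCompact C) (hCtd : IsTotallyDisconnected C)
    {δ : ℝ} (hδ : 0 < δ) :
    ∃ l : List (Set ℂ), l.Pairwise Disjoint ∧ (∀ K ∈ l, IsCompact K) ∧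
      (∀ K ∈ l, ∀ z ∈ K, ∀ w ∈ K, dist z w ≤ δ) ∧ l.foldr (· ∪ ·) ∅ = C := by
  classical
  haveI hXc : CompactSpace ↥C := isCompact_iff_compactSpace.mp hC
  haveI hXtd : TotallyDisconnectedSpace ↥C := totallyDisconnectedSpace_subtype_iff.mpr hCtd
  -- for each point a clopen neighborhood inside the ball of radius δ/2
  have hclopen : ∀ x : ↥C, ∃ V : Set ↥C, IsClopen V ∧ x ∈ V ∧
      V ⊆ Subtype.val ⁻¹' (Metric.ball (x : ℂ) (δ/2)) := by
    intro x
    apply compact_exists_isClopen_in_isOpen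
    · exact (Metric.isOpen_ball).preimage continuous_subtype_val
    · simp only [Set.mem_preimage, Metric.mem_ball, dist_self]
      positivity
  choose V hVclopen hVmem hVsub using hclopen
  obtain ⟨t, ht⟩ := IsCompact.elim_finite_subcover isCompact_univ V
    (fun x => (hVclopen x).2) (fun x _ => Set.mem_iUnion.mpr ⟨x, hVmem x⟩)
  -- the pieces downstairs
  set P : Set ℂ → Prop := fun K => K ⊆ C ∧ IsCompact K ∧ IsCompact (C \ K) with hPdef
  have himgP : ∀ x : ↥C, P (Subtype.val '' (V x)) := by
    intro x
    refine ⟨by rintro z ⟨w, _, rfl⟩; exact w.2, ?_, ?_⟩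
    · exact ((hVclopen x).1.isCompact).image continuous_subtype_val
    · have : C \ (Subtype.val '' (V x)) = Subtype.val '' (V x)ᶜ := by
        ext z
        constructor
        · rintro ⟨hzC, hz2⟩
          exact ⟨⟨z, hzC⟩, fun hmem => hz2 ⟨⟨z, hzC⟩, hmem, rfl⟩, rfl⟩
        · rintro ⟨w, hw1, rfl⟩
          refine ⟨w.2, ?_⟩
          rintro ⟨w', hw'1, hw'2⟩
          have : w' = w := Subtype.ext hw'2
          exact hw1 (this ▸ hw'1)
      rw [this]
      exact ((hVclopen x).2.isClosed_compl.isCompact).image continuous_subtype_val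
  have hPdiff : ∀ A B, P A → P B → P (A \ B) := by
    rintro A B ⟨hA1, hA2, hA3⟩ ⟨hB1, hB2, hB3⟩
    refine ⟨Set.diff_subset.trans hA1, ?_, ?_⟩
    · have : A \ B = A ∩ (C \ B) ∪ A ∩ Bᶜ ∩ Cᶜ := by
        ext z; simp only [Set.mem_diff, Set.mem_inter_iff, Set.mem_union, Set.mem_compl_iff]
        constructor
        · rintro ⟨h1, h2⟩
          by_cases hz : z ∈ C
          · exact Or.inl ⟨h1, hz, h2⟩
          · exact Or.inr ⟨⟨h1, h2⟩, hz⟩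
        · rintro (⟨h1, _, h3⟩ | ⟨⟨h1, h2⟩, _⟩)
          · exact ⟨h1, h3⟩
          · exact ⟨h1, h2⟩
      have hAC : A ∩ Bᶜ ∩ Cᶜ = ∅ := by
        rw [Set.eq_empty_iff_forall_notMem]
        rintro z ⟨⟨hz1, _⟩, hz3⟩
        exact hz3 (hA1 hz1)
      rw [this, hAC, Set.union_empty]
      exact hA2.inter_right hB3.isClosed
    · have : C \ (A \ B) = (C \ A) ∪ (C ∩ B) := by
        ext z; simp only [Set.mem_diff, Set.mem_union, Set.mem_inter_iff]
        tauto
      rw [this]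
      exact hA3.union (hC.inter_right hB2.isClosed)
  -- list of pieces
  obtain ⟨l', hpw, hprop, hun⟩ := disjointify P hPdiff
    (t.toList.map (fun x => Subtype.val '' (V x)))
    (by
      intro K hK
      obtain ⟨x, _, rfl⟩ := List.mem_map.mp hK
      exact himgP x)
  refine ⟨l', hpw, ?_, ?_, ?_⟩
  · intro K hK
    exact ((hprop K hK).1).2.1
  · intro K hK z hz w hw
    obtain ⟨_, Vimg, hVimg, hsub⟩ := hprop K hK
    obtain ⟨x, _, rfl⟩ := List.mem_map.mp hVimg
    have hz' : z ∈ Metric.ball (x : ℂ) (δ/2) := by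
      obtain ⟨u, hu, rfl⟩ := hsub hz
      exact hVsub x hu
    have hw' : w ∈ Metric.ball (x : ℂ) (δ/2) := by
      obtain ⟨u, hu, rfl⟩ := hsub hw
      exact hVsub x hu
    have := dist_triangle z (x : ℂ) w
    rw [Metric.mem_ball] at hz' hw'
    rw [dist_comm (x:ℂ) w] at this
    linarith [this, hz', hw']
  · rw [hun]
    apply Set.Subset.antisymm
    · intro z hz
      obtain ⟨K, hK, hzK⟩ := mem_foldr_union.mp hz
      obtain ⟨x, _, rfl⟩ := List.mem_map.mp hK
      obtain ⟨u, _, rfl⟩ := hzK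
      exact u.2
    · intro z hz
      have := ht (Set.mem_univ (⟨z, hz⟩ : ↥C))
      rw [Set.mem_iUnion] at this
      obtain ⟨x, hx⟩ := this
      rw [Set.mem_iUnion] at hx
      obtain ⟨hxt, hmem⟩ := hx
      apply mem_foldr_union.mpr
      exact ⟨Subtype.val '' (V x), List.mem_map.mpr ⟨x, Finset.mem_toList.mpr hxt, rfl⟩,
        ⟨⟨z, hz⟩, hmem, rfl⟩⟩





/-- The local lemma in the plane: a totally disconnected compact set does not locally
separate; two points of a small ball can be connected inside a larger ball avoiding `C`. -/
lemma local_plane {C : Set ℂ} (hC : IsCompact C) (hCtd : IsTotallyDisconnected C)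
    {q a b : ℂ} {ρ₁ ρ₂ : ℝ} (hρ12 : ρ₁ < ρ₂)
    (ha : a ∈ Metric.ball q ρ₁) (hb : b ∈ Metric.ball q ρ₁) (haC : a ∉ C) (hbC : b ∉ C) :
    ∃ W : Set ℂ, IsPreconnected W ∧ W ⊆ Metric.ball q ρ₂ \ C ∧ a ∈ W ∧ b ∈ W := by
  classical
  have hρ1pos : 0 < ρ₁ := lt_of_le_of_lt dist_nonneg (Metric.mem_ball.mp ha)
  -- distances from a, b to C
  obtain ⟨εa, hεa, hballa⟩ := Metric.isOpen_iff.mp hC.isClosed.isOpen_compl a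
    (Set.mem_compl haC)
  obtain ⟨εb, hεb, hballb⟩ := Metric.isOpen_iff.mp hC.isClosed.isOpen_compl b
    (Set.mem_compl hbC)
  have hdista : ∀ z ∈ C, εa ≤ dist a z := by
    intro z hz
    by_contra h
    push_neg at h
    exact (hballa (by rwa [Metric.mem_ball, dist_comm])) hz
  have hdistb : ∀ z ∈ C, εb ≤ dist b z := by
    intro z hz
    by_contra h
    push_neg at h
    exact (hballb (by rwa [Metric.mem_ball, dist_comm])) hz
  -- radii
  set ρ' : ℝ := (2*ρ₁ + ρ₂)/3 with hρ'def
  set ρ'' : ℝ := (ρ₁ + 2*ρ₂)/3 with hρ''def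
  have h1 : ρ₁ < ρ' := by rw [hρ'def]; linarith
  have h2 : ρ' < ρ'' := by rw [hρ'def, hρ''def]; linarith
  have h3 : ρ'' < ρ₂ := by rw [hρ''def]; linarith
  set δ : ℝ := min (min εa εb) (ρ' - ρ₁) / 10 with hδdef
  have hδpos : 0 < δ := by
    rw [hδdef]
    apply div_pos _ (by norm_num)
    apply lt_min (lt_min hεa hεb)
    linarith
  have hδa : δ < εa := by
    have : min (min εa εb) (ρ' - ρ₁) ≤ εa := le_trans (min_le_left _ _) (min_le_left _ _)
    rw [hδdef]; linarith
  have hδb : δ < εb := by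
    have : min (min εa εb) (ρ' - ρ₁) ≤ εb := le_trans (min_le_left _ _) (min_le_right _ _)
    rw [hδdef]; linarith
  have hδρ : ρ₁ < ρ' - δ := by
    have : min (min εa εb) (ρ' - ρ₁) ≤ ρ' - ρ₁ := min_le_right _ _
    rw [hδdef]; linarith
  -- the truncated set and its decomposition
  set C'' : Set ℂ := C ∩ Metric.closedBall q ρ'' with hC''def
  have hC''c : IsCompact C'' := hC.inter_right Metric.isClosed_closedBall
  have hC''td : IsTotallyDisconnected C'' := fun t ht h => hCtd t
    (ht.trans Set.inter_subset_left) h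
  obtain ⟨l₀, hpw₀, hcomp₀, hdiam₀, hun₀⟩ := clopen_decomposition hC''c hC''td hδpos
  -- annulus
  set S : Set ℂ := {z : ℂ | ρ' ≤ dist z q ∧ dist z q ≤ ρ''} with hSdef
  have hScl : IsClosed S := by
    apply IsClosed.inter
    · exact isClosed_le continuous_const (continuous_id.dist continuous_const)
    · exact isClosed_le (continuous_id.dist continuous_const) continuous_const
  have hScomp : IsCompact S := by
    apply Metric.isCompact_of_isClosed_isBounded hScl
    apply Bornology.IsBounded.subset (Metric.isBounded_closedBall (x := q) (r := ρ''))
    intro z hz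
    exact Metric.mem_closedBall.mpr hz.2
  -- split pieces into inner and touching
  set inner : Set ℂ → Prop := fun K => ∀ z ∈ K, dist z q < ρ' with hinnerdef
  set l_in : List (Set ℂ) := l₀.filter (fun K => decide (inner K)) with hlin
  set l_touch : List (Set ℂ) := l₀.filter (fun K => !decide (inner K)) with hltouch
  have hmem_in : ∀ K, K ∈ l_in ↔ K ∈ l₀ ∧ inner K := by
    intro K
    rw [hlin, List.mem_filter]
    simp
  have hmem_touch : ∀ K, K ∈ l_touch ↔ K ∈ l₀ ∧ ¬ inner K := by
    intro K
    rw [hltouch, List.mem_filter]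
    simp
  -- touching pieces stay distance ≥ ρ' - δ from q
  have htouch_far : ∀ K ∈ l_touch, ∀ z ∈ K, ρ' - δ ≤ dist z q := by
    intro K hK z hz
    obtain ⟨hK₀, hKni⟩ := (hmem_touch K).mp hK
    simp only [hinnerdef, not_forall, not_lt, exists_prop] at hKni
    obtain ⟨w, hw, hwdist⟩ := hKni
    have hd := hdiam₀ K hK₀ z hz w hw
    have := dist_triangle w z q
    rw [dist_comm w z] at this
    linarith
  set Sstar : Set ℂ := S ∪ (l_touch.foldr (· ∪ ·) ∅) with hSstar
  have hSstarcomp : IsCompact Sstar := by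
    apply hScomp.union
    apply foldr_union_compact
    intro K hK
    exact hcomp₀ K ((hmem_touch K).mp hK).1
  -- the Janiszewski list
  set L : List (Set ℂ) := Sstar :: l_in with hLdef
  have hLpw : L.Pairwise Disjoint := by
    rw [hLdef, List.pairwise_cons]
    constructor
    · intro K hK
      rw [Set.disjoint_right]
      intro z hzK
      obtain ⟨hK₀, hKin⟩ := (hmem_in K).mp hK
      have hzlt : dist z q < ρ' := hKin z hzK
      rw [hSstar]
      rintro (hzS | hzT)
      · rw [hSdef] at hzS
        exact absurd hzS.1 (not_le.mpr hzlt)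
      · obtain ⟨K', hK', hzK'⟩ := mem_foldr_union.mp hzT
        obtain ⟨hK'₀, hK'ni⟩ := (hmem_touch K').mp hK'
        have hfar := htouch_far K' hK' z hzK'
        have hKne : K ≠ K' := by
          intro h
          exact hK'ni (h ▸ hKin)
        have hdisj : Disjoint K K' := by
          exact List.Pairwise.forall hpw₀ hK₀ hK'₀ hKne
        exact absurd hzK' (Set.disjoint_left.mp hdisj hzK)
    · exact List.Pairwise.sublist List.filter_sublist hpw₀
  have hLcomp : ∀ K ∈ L, IsCompact K := by
    intro K hK
    rcases List.mem_cons.mp hK with rfl | hK'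
    · exact hSstarcomp
    · exact hcomp₀ K ((hmem_in K).mp hK').1
  -- SameComp for each member
  have hLsc : ∀ K ∈ L, SameComp K a b := by
    intro K hK
    rcases List.mem_cons.mp hK with rfl | hK'
    · -- the fattened annulus: use the small ball
      refine ⟨Metric.ball q (ρ' - δ), (convex_ball q _).isPreconnected, ?_, ?_, ?_⟩
      · intro z hz
        rw [Metric.mem_ball] at hz
        rw [Set.mem_compl_iff, hSstar]
        rintro (hzS | hzT)
        · rw [hSdef] at hzS
          have := hzS.1
          linarith
        · obtain ⟨K', hK', hzK'⟩ := mem_foldr_union.mp hzT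
          have := htouch_far K' hK' z hzK'
          linarith
      · rw [Metric.mem_ball]
        calc dist a q < ρ₁ := Metric.mem_ball.mp ha
          _ < ρ' - δ := hδρ
      · rw [Metric.mem_ball]
        calc dist b q < ρ₁ := Metric.mem_ball.mp hb
          _ < ρ' - δ := hδρ
    · -- a small piece: use the exterior of a small closed ball
      obtain ⟨hK₀, _⟩ := (hmem_in K).mp hK'
      rcases K.eq_empty_or_nonempty with rfl | ⟨c, hc⟩
      · exact ⟨Set.univ, isPreconnected_univ, by simp, Set.mem_univ a, Set.mem_univ b⟩
      have hKc : K ⊆ Metric.closedBall c δ := by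
        intro z hz
        rw [Metric.mem_closedBall]
        exact hdiam₀ K hK₀ z hz c hc
      have hcC : c ∈ C := by
        have : c ∈ C'' := hun₀ ▸ mem_foldr_union.mpr ⟨K, hK₀, hc⟩
        exact this.1
      refine ⟨(Metric.closedBall c δ)ᶜ,
        (extBall_pathConnected c δ hδpos.le).isConnected.isPreconnected,
        fun z hz hzK => hz (hKc hzK), ?_, ?_⟩
      · rw [Set.mem_compl_iff, Metric.mem_closedBall, not_le]
        calc δ < εa := hδa
          _ ≤ dist a c := hdista c hcC
      · rw [Set.mem_compl_iff, Metric.mem_closedBall, not_le]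
        calc δ < εb := hδb
          _ ≤ dist b c := hdistb c hcC
  obtain ⟨W, hWconn, hWsub, haW, hbW⟩ := janiszewski_list L hLpw hLcomp a b hLsc
  -- W avoids S and C''
  have hWS : ∀ z ∈ W, z ∉ S := by
    intro z hz hzS
    apply hWsub hz
    rw [hLdef]
    simp only [List.foldr_cons]
    exact Or.inl (Or.inl hzS)
  have hWC'' : ∀ z ∈ W, z ∉ C'' := by
    intro z hz hzC
    apply hWsub hz
    rw [hLdef]
    simp only [List.foldr_cons]
    have : z ∈ l₀.foldr (· ∪ ·) ∅ := hun₀ ▸ hzC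
    obtain ⟨K, hK₀, hzK⟩ := mem_foldr_union.mp this
    by_cases hKin : inner K
    · exact Or.inr (mem_foldr_union.mpr ⟨K, (hmem_in K).mpr ⟨hK₀, hKin⟩, hzK⟩)
    · exact Or.inl (Or.inr (mem_foldr_union.mpr ⟨K, (hmem_touch K).mpr ⟨hK₀, hKin⟩, hzK⟩))
  -- W stays in the ball of radius ρ'
  have hWball : W ⊆ Metric.ball q ρ' := by
    by_contra hnot
    rw [Set.not_subset] at hnot
    obtain ⟨w, hwW, hwball⟩ := hnot
    have hwgt : ρ'' < dist w q := by
      rw [Metric.mem_ball, not_lt] at hwball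
      rcases lt_or_ge ρ'' (dist w q) with h | h
      · exact h
      · exact absurd ⟨hwball, h⟩ (hWS w hwW)
    have := hWconn (Metric.ball q ρ') {z : ℂ | ρ'' < dist z q}
      Metric.isOpen_ball
      (isOpen_lt continuous_const (continuous_id.dist continuous_const))
      (by
        intro z hz
        rcases lt_or_ge (dist z q) ρ' with h | h
        · exact Or.inl (Metric.mem_ball.mpr h)
        · right
          rcases lt_or_ge ρ'' (dist z q) with h' | h'
          · exact h'
          · exact absurd ⟨h, h'⟩ (hWS z hz))
      ⟨a, haW, Metric.mem_ball.mpr (lt_trans (Metric.mem_ball.mp ha) h1)⟩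
      ⟨w, hwW, hwgt⟩
    obtain ⟨z, _, hz1, hz2⟩ := this
    rw [Metric.mem_ball] at hz1
    rw [Set.mem_setOf_eq] at hz2
    linarith
  refine ⟨W, hWconn, ?_, haW, hbW⟩
  intro z hz
  constructor
  · exact Metric.mem_ball.mpr (lt_trans (Metric.mem_ball.mp (hWball hz)) (lt_trans h2 h3))
  · intro hzC
    apply hWC'' z hz
    rw [hC''def]
    refine ⟨hzC, Metric.mem_closedBall.mpr ?_⟩
    have := Metric.mem_ball.mp (hWball hz)
    linarith





variable {m : ℕ}

local notation "E" => EuclideanSpace ℝ (Fin m)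

/-- The local non-separation lemma in Euclidean space of dimension at least 2. -/
lemma local_euclidean (hm : 2 ≤ m) {C : Set E}
    (hC : IsCompact C) (hCtd : IsTotallyDisconnected C)
    {p x y : E} {r : ℝ}
    (hx : x ∈ Metric.ball p r) (hy : y ∈ Metric.ball p r) (hxC : x ∉ C) (hyC : y ∉ C) :
    ∃ W : Set E, IsPreconnected W ∧ W ⊆ Metric.ball p (4*r) \ C ∧ x ∈ W ∧ y ∈ W := by
  have hrpos : 0 < r := lt_of_le_of_lt dist_nonneg (Metric.mem_ball.mp hx)
  rcases eq_or_ne x y with rfl | hxy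
  · refine ⟨{x}, isPreconnected_singleton, ?_, rfl, rfl⟩
    intro z hz
    rw [Set.mem_singleton_iff] at hz
    subst hz
    refine ⟨Metric.mem_ball.mpr (lt_of_lt_of_le (Metric.mem_ball.mp hx) (by linarith)), hxC⟩
  -- construct an orthonormal pair
  have hyx : y - x ≠ 0 := sub_ne_zero.mpr (Ne.symm hxy)
  have hspan : Submodule.span ℝ ({y - x} : Set E) ≠ ⊤ := by
    intro h
    have h1 : Module.finrank ℝ (Submodule.span ℝ ({y - x} : Set E)) = 1 :=
      finrank_span_singleton hyx
    rw [h, finrank_top] at h1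
    rw [finrank_euclideanSpace_fin] at h1
    omega
  obtain ⟨v, hv⟩ : ∃ v : E, v ∉ Submodule.span ℝ ({y - x} : Set E) := by
    by_contra h
    push_neg at h
    exact hspan (Submodule.eq_top_iff'.mpr h)
  set u₁ : E := ‖y - x‖⁻¹ • (y - x) with hu₁def
  have hu₁norm : ‖u₁‖ = 1 := norm_smul_inv_norm hyx
  set w : E := v - (inner ℝ u₁ v : ℝ) • u₁ with hwdef
  have hinner_u₁u₁ : (inner ℝ u₁ u₁ : ℝ) = 1 := by
    rw [real_inner_self_eq_norm_sq, hu₁norm]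
    norm_num
  have hwinner : (inner ℝ u₁ w : ℝ) = 0 := by
    rw [hwdef, inner_sub_right, real_inner_smul_right, hinner_u₁u₁]
    ring
  have hwne : w ≠ 0 := by
    intro h0
    apply hv
    have hveq : v = (inner ℝ u₁ v : ℝ) • u₁ := by
      have := sub_eq_zero.mp (hwdef ▸ h0)
      exact this
    rw [hveq, hu₁def]
    exact Submodule.smul_mem _ _ (Submodule.smul_mem _ _ (Submodule.mem_span_singleton_self _))
  set u₂ : E := ‖w‖⁻¹ • w with hu₂def
  have hu₂norm : ‖u₂‖ = 1 := norm_smul_inv_norm hwne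
  have horth : (inner ℝ u₁ u₂ : ℝ) = 0 := by
    rw [hu₂def, real_inner_smul_right, hwinner]
    ring
  have hu₁span : ∃ c : ℝ, u₁ = c • (y - x) := ⟨‖y - x‖⁻¹, hu₁def⟩
  clear_value u₂ w u₁
  -- the isometric plane embedding
  set φ : ℂ → E := fun z => x + z.re • u₁ + z.im • u₂ with hφdef
  have hφ0 : φ 0 = x := by rw [hφdef]; simp
  have hφcont : Continuous φ := by
    rw [hφdef]
    fun_prop
  have hnorm2 : ∀ s t : ℝ, ‖s • u₁ + t • u₂‖ = Real.sqrt (s^2 + t^2) := by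
    intro s t
    have h1 : ‖s • u₁ + t • u₂‖^2 = s^2 + t^2 := by
      rw [norm_add_sq_real]
      rw [norm_smul, norm_smul, hu₁norm, hu₂norm]
      rw [real_inner_smul_left, real_inner_smul_right, horth]
      simp [mul_pow, sq_abs]
    rw [← h1, Real.sqrt_sq (norm_nonneg _)]
  have hiso : ∀ z z' : ℂ, dist (φ z) (φ z') = dist z z' := by
    intro z z'
    have hdiff : φ z - φ z' = (z - z').re • u₁ + (z - z').im • u₂ := by
      rw [hφdef]
      simp only [Complex.sub_re, Complex.sub_im]
      module
    rw [dist_eq_norm, hdiff, hnorm2, Complex.dist_eq, Complex.norm_def, Complex.normSq_apply]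
    ring_nf
  have hφinj : Function.Injective φ := by
    intro z z' h
    have := hiso z z'
    rw [h, dist_self] at this
    exact (dist_eq_zero.mp this.symm)
  -- pull back C
  set Cw : Set ℂ := φ ⁻¹' C with hCwdef
  have hCwclosed : IsClosed Cw := hC.isClosed.preimage hφcont
  have hCwbdd : Bornology.IsBounded Cw := by
    obtain ⟨R, hR⟩ := hC.isBounded.subset_closedBall x
    apply Bornology.IsBounded.subset (Metric.isBounded_closedBall (x := (0:ℂ)) (r := R))
    intro z hz
    rw [Metric.mem_closedBall]
    have h1 : dist (φ z) x ≤ R := by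
      have := hR hz
      rwa [Metric.mem_closedBall] at this
    calc dist z 0 = dist (φ z) (φ 0) := (hiso z 0).symm
      _ = dist (φ z) x := by rw [hφ0]
      _ ≤ R := h1
  have hCwcomp : IsCompact Cw := Metric.isCompact_of_isClosed_isBounded hCwclosed hCwbdd
  have hCwtd : IsTotallyDisconnected Cw := by
    intro t ht hpre
    have himg : (φ '' t).Subsingleton := by
      apply hCtd (φ '' t)
      · rintro z ⟨z', hz', rfl⟩
        exact ht hz'
      · exact hpre.image φ hφcont.continuousOn
    intro z hz z' hz'
    apply hφinj
    exact himg ⟨z, hz, rfl⟩ ⟨z', hz', rfl⟩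
  -- coordinates of x and y
  set b' : ℂ := ((‖y - x‖ : ℝ) : ℂ) with hb'def
  have hφb' : φ b' = y := by
    rw [hφdef, hb'def]
    simp only [Complex.ofReal_re, Complex.ofReal_im, zero_smul, add_zero]
    obtain ⟨c, hc⟩ := hu₁span
    rw [hu₁def, smul_smul, mul_inv_cancel₀ (norm_ne_zero_iff.mpr hyx), one_smul]
    abel
  have h0C : (0:ℂ) ∉ Cw := by
    rw [hCwdef, Set.mem_preimage, hφ0]
    exact hxC
  have hb'C : b' ∉ Cw := by
    rw [hCwdef, Set.mem_preimage, hφb']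
    exact hyC
  have h0ball : (0:ℂ) ∈ Metric.ball (0:ℂ) (2*r) := by
    rw [Metric.mem_ball, dist_self]
    linarith
  have hb'ball : b' ∈ Metric.ball (0:ℂ) (2*r) := by
    rw [Metric.mem_ball, hb'def, Complex.dist_eq, sub_zero, Complex.norm_real, Real.norm_eq_abs,
      _root_.abs_of_nonneg (norm_nonneg _)]
    have h1 : ‖y - x‖ = dist y x := (dist_eq_norm y x).symm
    rw [h1]
    calc dist y x ≤ dist y p + dist p x := dist_triangle y p x
      _ < r + r := by
          have := Metric.mem_ball.mp hy
          have := Metric.mem_ball.mp hx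
          rw [dist_comm p x]
          linarith
      _ = 2*r := by ring
  obtain ⟨W', hW'conn, hW'sub, h0W', hb'W'⟩ := local_plane hCwcomp hCwtd
    (show (2*r : ℝ) < 3*r by linarith) h0ball hb'ball h0C hb'C
  refine ⟨φ '' W', hW'conn.image φ hφcont.continuousOn, ?_, ⟨0, h0W', hφ0⟩, ⟨b', hb'W', hφb'⟩⟩
  rintro z ⟨z', hz', rfl⟩
  obtain ⟨hz'ball, hz'C⟩ := hW'sub hz'
  constructor
  · rw [Metric.mem_ball]
    calc dist (φ z') p ≤ dist (φ z') x + dist x p := dist_triangle _ _ _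
      _ = dist z' 0 + dist x p := by rw [← hφ0, hiso]
      _ < 3*r + r := by
          have h1 := Metric.mem_ball.mp hz'ball
          rw [dist_zero_right] at h1 ⊢
          have h2 := Metric.mem_ball.mp hx
          have : dist z' 0 < 3*r := by rwa [dist_zero_right]
          rw [← dist_zero_right]
          linarith
      _ = 4*r := by ring
  · exact hz'C





theorem stmt_4 (m : ℕ) (hm : 2 ≤ m) (U : Set (EuclideanSpace ℝ (Fin m)))
    (hUopen : IsOpen U) (hUconn : IsConnected U)
    (C : Set (EuclideanSpace ℝ (Fin m)))
    (hCcompact : IsCompact C) (hCtd : IsTotallyDisconnected C) :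
    IsConnected (U \ C) ∧ IsPathConnected (U \ C) := by
  have hmpos : 0 < m := by omega
  -- C has empty interior
  have hCint : ∀ (p : (EuclideanSpace ℝ (Fin m))) (r : ℝ), 0 < r → ¬(Metric.ball p r ⊆ C) := by
    intro p r hr hball
    set i0 : Fin m := ⟨0, hmpos⟩
    set q : (EuclideanSpace ℝ (Fin m)) := p + EuclideanSpace.single i0 (r/2) with hqdef
    have hqp : dist q p = r/2 := by
      rw [dist_eq_norm, hqdef]
      rw [add_sub_cancel_left]
      rw [EuclideanSpace.norm_single]
      rw [Real.norm_eq_abs, abs_of_pos (by linarith)]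
    have hqball : q ∈ Metric.ball p r := by
      rw [Metric.mem_ball, hqp]; linarith
    have hqne : q ≠ p := by
      intro h
      rw [h, dist_self] at hqp
      linarith
    have hsub : (Metric.ball p r).Subsingleton :=
      hCtd _ hball (convex_ball p r).isPreconnected
    exact hqne (hsub hqball (Metric.mem_ball_self hr))
  have hUCopen : IsOpen (U \ C) := hUopen.sdiff hCcompact.isClosed
  -- nonemptiness
  obtain ⟨p₀, hp₀⟩ := hUconn.nonempty
  obtain ⟨r₀, hr₀pos, hr₀⟩ := Metric.isOpen_iff.mp hUopen p₀ hp₀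
  have hUCne : (U \ C).Nonempty := by
    by_contra h
    rw [Set.not_nonempty_iff_eq_empty] at h
    apply hCint p₀ r₀ hr₀pos
    intro z hz
    by_contra hzC
    have : z ∈ U \ C := ⟨hr₀ hz, hzC⟩
    rw [h] at this
    exact this
  -- preconnectedness
  have hpre : IsPreconnected (U \ C) := by
    intro s t hs ht hsub ⟨vs, hvs⟩ ⟨vt, hvt⟩
    by_contra hempty
    rw [Set.not_nonempty_iff_eq_empty] at hempty
    have hWcontra : ∀ W' : Set (EuclideanSpace ℝ (Fin m)), IsPreconnected W' → W' ⊆ U \ C →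
        (W' ∩ s).Nonempty → (W' ∩ t).Nonempty → False := by
      intro W' hW1 hW2 h3 h4
      obtain ⟨z, hz1, hz2⟩ := hW1 s t hs ht (hW2.trans hsub) h3 h4
      have : z ∈ (U \ C) ∩ (s ∩ t) := ⟨hW2 hz1, hz2⟩
      rw [hempty] at this
      exact this
    -- the two open "sides" in U
    set V' : Set (EuclideanSpace ℝ (Fin m)) := {p : (EuclideanSpace ℝ (Fin m)) | ∃ ρ > 0, Metric.ball p ρ ⊆ U ∧
      Metric.ball p ρ ∩ ((U \ C) ∩ t) = ∅} with hV'def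
    set W' : Set (EuclideanSpace ℝ (Fin m)) := {p : (EuclideanSpace ℝ (Fin m)) | ∃ ρ > 0, Metric.ball p ρ ⊆ U ∧
      Metric.ball p ρ ∩ ((U \ C) ∩ s) = ∅} with hW'def
    have hV'open : IsOpen V' := by
      rw [Metric.isOpen_iff]
      rintro p ⟨ρ, hρpos, hρU, hρt⟩
      refine ⟨ρ/2, by linarith, ?_⟩
      intro p' hp'
      refine ⟨ρ/2, by linarith, ?_, ?_⟩
      · intro z hz
        apply hρU
        rw [Metric.mem_ball] at *
        calc dist z p ≤ dist z p' + dist p' p := dist_triangle _ _ _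
          _ < ρ/2 + ρ/2 := by exact add_lt_add hz hp'
          _ = ρ := by ring
      · rw [Set.eq_empty_iff_forall_notMem]
        rintro z ⟨hz1, hz2⟩
        have hzρ : z ∈ Metric.ball p ρ := by
          rw [Metric.mem_ball] at *
          calc dist z p ≤ dist z p' + dist p' p := dist_triangle _ _ _
            _ < ρ/2 + ρ/2 := add_lt_add hz1 hp'
            _ = ρ := by ring
        rw [Set.eq_empty_iff_forall_notMem] at hρt
        exact hρt z ⟨hzρ, hz2⟩
    have hW'open : IsOpen W' := by
      rw [Metric.isOpen_iff]
      rintro p ⟨ρ, hρpos, hρU, hρt⟩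
      refine ⟨ρ/2, by linarith, ?_⟩
      intro p' hp'
      refine ⟨ρ/2, by linarith, ?_, ?_⟩
      · intro z hz
        apply hρU
        rw [Metric.mem_ball] at *
        calc dist z p ≤ dist z p' + dist p' p := dist_triangle _ _ _
          _ < ρ/2 + ρ/2 := by exact add_lt_add hz hp'
          _ = ρ := by ring
      · rw [Set.eq_empty_iff_forall_notMem]
        rintro z ⟨hz1, hz2⟩
        have hzρ : z ∈ Metric.ball p ρ := by
          rw [Metric.mem_ball] at *
          calc dist z p ≤ dist z p' + dist p' p := dist_triangle _ _ _
            _ < ρ/2 + ρ/2 := add_lt_add hz1 hp'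
            _ = ρ := by ring
        rw [Set.eq_empty_iff_forall_notMem] at hρt
        exact hρt z ⟨hzρ, hz2⟩
    -- the two sides are disjoint
    have hV'W' : V' ∩ W' ∩ U = ∅ := by
      rw [Set.eq_empty_iff_forall_notMem]
      rintro p ⟨⟨⟨ρ₁, hρ₁pos, hρ₁U, hρ₁t⟩, ⟨ρ₂, hρ₂pos, hρ₂U, hρ₂s⟩⟩, hpU⟩
      set ρ := min ρ₁ ρ₂ with hρdef
      have hρpos : 0 < ρ := lt_min hρ₁pos hρ₂pos
      apply hCint p ρ hρpos
      intro z hz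
      by_contra hzC
      have hzU : z ∈ U := hρ₁U (Metric.mem_ball.mp hz |>.trans_le (min_le_left _ _) |> Metric.mem_ball.mpr)
      have hzUC : z ∈ U \ C := ⟨hzU, hzC⟩
      rcases hsub hzUC with hzs | hzt
      · rw [Set.eq_empty_iff_forall_notMem] at hρ₂s
        exact hρ₂s z ⟨Metric.mem_ball.mpr ((Metric.mem_ball.mp hz).trans_le (min_le_right _ _)),
          hzUC, hzs⟩
      · rw [Set.eq_empty_iff_forall_notMem] at hρ₁t
        exact hρ₁t z ⟨Metric.mem_ball.mpr ((Metric.mem_ball.mp hz).trans_le (min_le_left _ _)),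
          hzUC, hzt⟩
    -- membership of the original pieces
    have hVsub : (U \ C) ∩ s ⊆ V' := by
      rintro p ⟨hpUC, hps⟩
      have : IsOpen ((U \ C) ∩ s) := hUCopen.inter hs
      obtain ⟨ρ, hρpos, hρsub⟩ := Metric.isOpen_iff.mp this p ⟨hpUC, hps⟩
      refine ⟨ρ, hρpos, fun z hz => ((hρsub hz).1).1, ?_⟩
      rw [Set.eq_empty_iff_forall_notMem]
      rintro z ⟨hz1, hz2, hz3⟩
      have hzs : z ∈ s := (hρsub hz1).2
      have : z ∈ (U \ C) ∩ (s ∩ t) := ⟨hz2, hzs, hz3⟩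
      rw [hempty] at this
      exact this
    have hWsub : (U \ C) ∩ t ⊆ W' := by
      rintro p ⟨hpUC, hpt⟩
      have : IsOpen ((U \ C) ∩ t) := hUCopen.inter ht
      obtain ⟨ρ, hρpos, hρsub⟩ := Metric.isOpen_iff.mp this p ⟨hpUC, hpt⟩
      refine ⟨ρ, hρpos, fun z hz => ((hρsub hz).1).1, ?_⟩
      rw [Set.eq_empty_iff_forall_notMem]
      rintro z ⟨hz1, hz2, hz3⟩
      have hzt : z ∈ t := (hρsub hz1).2
      have : z ∈ (U \ C) ∩ (s ∩ t) := ⟨hz2, hz3, hzt⟩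
      rw [hempty] at this
      exact this
    -- U is covered
    have hUcov : U ⊆ V' ∪ W' := by
      intro p hpU
      by_cases hpC : p ∈ C
      · -- use the local lemma
        obtain ⟨ε, hεpos, hεU⟩ := Metric.isOpen_iff.mp hUopen p hpU
        set r := ε/4 with hrdef
        have hrpos : 0 < r := by rw [hrdef]; linarith
        have h4r : Metric.ball p (4*r) ⊆ U := by
          rw [hrdef]
          intro z hz
          apply hεU
          rw [Metric.mem_ball] at *
          linarith [hz]
        by_cases hcase : (Metric.ball p r ∩ ((U \ C) ∩ t)).Nonempty
        · -- then the s-side must be empty near p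
          right
          refine ⟨r, hrpos, fun z hz => h4r (Metric.mem_ball.mpr (by
            have := Metric.mem_ball.mp hz; linarith)), ?_⟩
          rw [Set.eq_empty_iff_forall_notMem]
          rintro z ⟨hz1, hz2, hz3⟩
          obtain ⟨w, hw1, hw2, hw3⟩ := hcase
          obtain ⟨W'', hW''conn, hW''sub, hzW'', hwW''⟩ := local_euclidean hm hCcompact hCtd
            hz1 hw1 hz2.2 hw2.2
          apply hWcontra W'' hW''conn
          · intro u hu
            obtain ⟨hu1, hu2⟩ := hW''sub hu
            exact ⟨h4r hu1, hu2⟩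
          · exact ⟨z, hzW'', hz3⟩
          · exact ⟨w, hwW'', hw3⟩
        · left
          refine ⟨r, hrpos, fun z hz => h4r (Metric.mem_ball.mpr (by
            have := Metric.mem_ball.mp hz; linarith)), ?_⟩
          rw [Set.not_nonempty_iff_eq_empty] at hcase
          exact hcase
      · rcases hsub ⟨hpU, hpC⟩ with hps | hpt
        · exact Or.inl (hVsub ⟨⟨hpU, hpC⟩, hps⟩)
        · exact Or.inr (hWsub ⟨⟨hpU, hpC⟩, hpt⟩)
    -- contradiction with connectedness of U
    have := hUconn.isPreconnected V' W' hV'open hW'open hUcov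
      ⟨vs, hvs.1.1, hVsub hvs⟩ ⟨vt, hvt.1.1, hWsub hvt⟩
    obtain ⟨z, hz1, hz2⟩ := this
    rw [Set.eq_empty_iff_forall_notMem] at hV'W'
    exact hV'W' z ⟨hz2, hz1⟩
  have hconn : IsConnected (U \ C) := ⟨hUCne, hpre⟩
  refine ⟨hconn, ?_⟩
  exact hUCopen.isConnected_iff_isPathConnected.mp hconn
end
end

section
/- Let n ≥ 1, let γ : ℝ → ℝ^{n+1} be a smooth curve with ‖γ'(t)‖ = 1 for all t which is injective on a compact interval [a, b] (a < b), and let v_1, …, v_n : ℝ → ℝ^{n+1} be smooth maps such that for every t the vectors (v_1(t), …, v_n(t), γ'(t)) form an orthonormal basis of ℝ^{n+1}. Define Φ(x_1, …, x_n, t) = γ(t) + Σ_{i=1}^n x_i v_i(t). Then there exists δ₀ > 0 such that for every 0 < δ ≤ δ₀, the restriction of Φ to (closed ball of radius δ in ℝⁿ) × [a, b] is injective and the derivative DΦ is an invertible linear map at every point of this set; hence Φ is a diffeomorphism of this cylinder onto its image (a tubular neighborhood of γ([a,b])). -/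
open ContinuousLinearMap in
private lemma aux_bij_of_basis (n : ℕ)
    (γ : ℝ → EuclideanSpace ℝ (Fin (n + 1)))
    (v : Fin n → ℝ → EuclideanSpace ℝ (Fin (n + 1)))
    (honb : ∀ t : ℝ, Orthonormal ℝ (Fin.snoc (fun i : Fin n => v i t) (deriv γ t)))
    (t : ℝ)
    (L : EuclideanSpace ℝ (Fin n) × ℝ →L[ℝ] EuclideanSpace ℝ (Fin (n + 1)))
    (hL : ∀ p : EuclideanSpace ℝ (Fin n) × ℝ,
      L p = p.2 • deriv γ t + ∑ i : Fin n, p.1 i • v i t) :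
    Function.Bijective L := by
  have hspan : Submodule.span ℝ
      (Set.range (Fin.snoc (fun i : Fin n => v i t) (deriv γ t))) = ⊤ := by
    apply LinearIndependent.span_eq_top_of_card_eq_finrank (honb t).linearIndependent
    simp [finrank_euclideanSpace]
  have hsub : Set.range (Fin.snoc (fun i : Fin n => v i t) (deriv γ t)) ⊆
      Set.range L := by
    rintro - ⟨j, rfl⟩
    induction j using Fin.lastCases with
    | last => exact ⟨(0, 1), by simp [hL]⟩
    | cast i => exact ⟨(EuclideanSpace.single i 1, 0), by
        simp [hL, EuclideanSpace.single_apply]⟩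
  have hrange : LinearMap.range (L : EuclideanSpace ℝ (Fin n) × ℝ →ₗ[ℝ]
      EuclideanSpace ℝ (Fin (n + 1))) = ⊤ := by
    rw [← top_le_iff, ← hspan]
    refine Submodule.span_le.mpr fun y hy => ?_
    obtain ⟨p, rfl⟩ := hsub hy
    exact ⟨p, rfl⟩
  have hsurj : Function.Surjective L := LinearMap.range_eq_top.mp hrange
  have hfr : Module.finrank ℝ (EuclideanSpace ℝ (Fin n) × ℝ) =
      Module.finrank ℝ (EuclideanSpace ℝ (Fin (n + 1))) := by
    simp [finrank_euclideanSpace]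
  exact ⟨(LinearMap.injective_iff_surjective_of_finrank_eq_finrank hfr).mpr hsurj, hsurj⟩

private lemma aux_isUnit_of_bijective {G : Type*} [NormedAddCommGroup G] [NormedSpace ℝ G]
    [FiniteDimensional ℝ G] (f : G →L[ℝ] G) (hf : Function.Bijective f) : IsUnit f := by
  let e : G ≃L[ℝ] G :=
    LinearEquiv.toContinuousLinearEquiv (LinearEquiv.ofBijective (f : G →ₗ[ℝ] G) hf)
  refine ⟨⟨f, (e.symm : G →L[ℝ] G), ?_, ?_⟩, rfl⟩
  · ext x; exact e.apply_symm_apply x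
  · ext x; exact e.symm_apply_apply x

private lemma aux_bijective_of_isUnit {G : Type*} [NormedAddCommGroup G] [NormedSpace ℝ G]
    (f : G →L[ℝ] G) (hf : IsUnit f) : Function.Bijective f := by
  obtain ⟨u, rfl⟩ := hf
  refine Function.bijective_iff_has_inverse.mpr ⟨(↑u⁻¹ : G →L[ℝ] G), ?_, ?_⟩
  · intro x
    have h := ContinuousLinearMap.ext_iff.mp u.inv_mul x
    rwa [ContinuousLinearMap.mul_apply, ContinuousLinearMap.one_apply] at h
  · intro x
    have h := ContinuousLinearMap.ext_iff.mp u.mul_inv x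
    rwa [ContinuousLinearMap.mul_apply, ContinuousLinearMap.one_apply] at h

set_option maxHeartbeats 1000000 in
theorem stmt_10 (n : ℕ) (hn : 1 ≤ n)
    (γ : ℝ → EuclideanSpace ℝ (Fin (n + 1))) (hγ : ContDiff ℝ (⊤ : ℕ∞) γ)
    (hγunit : ∀ t, ‖deriv γ t‖ = 1)
    (a b : ℝ) (hab : a < b) (hγinj : Set.InjOn γ (Set.Icc a b))
    (v : Fin n → ℝ → EuclideanSpace ℝ (Fin (n + 1)))
    (hv : ∀ i, ContDiff ℝ (⊤ : ℕ∞) (v i))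
    (honb : ∀ t : ℝ, Orthonormal ℝ (Fin.snoc (fun i : Fin n => v i t) (deriv γ t)))
    (Φ : EuclideanSpace ℝ (Fin n) × ℝ → EuclideanSpace ℝ (Fin (n + 1)))
    (hΦ : ∀ (x : EuclideanSpace ℝ (Fin n)) (t : ℝ),
      Φ (x, t) = γ t + ∑ i : Fin n, x i • v i t) :
    ∃ δ₀ > (0 : ℝ), ∀ δ : ℝ, 0 < δ → δ ≤ δ₀ →
      Set.InjOn Φ (Metric.closedBall 0 δ ×ˢ Set.Icc a b) ∧
      ∀ p ∈ (Metric.closedBall (0 : EuclideanSpace ℝ (Fin n)) δ) ×ˢ Set.Icc a b,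
        Function.Bijective (fderiv ℝ Φ p) := by
  classical
  open ContinuousLinearMap in
  have hΦfun : Φ = fun p : EuclideanSpace ℝ (Fin n) × ℝ =>
      γ p.2 + ∑ i : Fin n, p.1 i • v i p.2 := by
    funext p
    rw [← hΦ p.1 p.2]
  subst hΦfun
  -- smoothness
  have hsmooth : ContDiff ℝ (⊤ : ℕ∞) (fun p : EuclideanSpace ℝ (Fin n) × ℝ =>
      γ p.2 + ∑ i : Fin n, p.1 i • v i p.2) := by
    apply ContDiff.add (hγ.comp contDiff_snd)
    apply ContDiff.sum
    intro i _
    exact (((EuclideanSpace.proj i : EuclideanSpace ℝ (Fin n) →L[ℝ] ℝ).contDiff).comp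
      contDiff_fst).smul ((hv i).comp contDiff_snd)
  -- derivative formula
  have hder : ∀ (x : EuclideanSpace ℝ (Fin n)) (t : ℝ),
      HasFDerivAt (fun p : EuclideanSpace ℝ (Fin n) × ℝ =>
        γ p.2 + ∑ i : Fin n, p.1 i • v i p.2)
      (((1 : ℝ →L[ℝ] ℝ).smulRight (deriv γ t)).comp
          (ContinuousLinearMap.snd ℝ (EuclideanSpace ℝ (Fin n)) ℝ)
        + ∑ i : Fin n,
          (x i • ((1 : ℝ →L[ℝ] ℝ).smulRight (deriv (v i) t)).comp
              (ContinuousLinearMap.snd ℝ (EuclideanSpace ℝ (Fin n)) ℝ)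
            + (((EuclideanSpace.proj i : EuclideanSpace ℝ (Fin n) →L[ℝ] ℝ)).comp
                (ContinuousLinearMap.fst ℝ (EuclideanSpace ℝ (Fin n)) ℝ)).smulRight (v i t)))
      (x, t) := by
    intro x t
    apply HasFDerivAt.add
    · exact (hasDerivAt_iff_hasFDerivAt.mp (hγ.differentiable (by simp) t).hasDerivAt).comp
        (x, t) (hasFDerivAt_snd)
    · apply HasFDerivAt.fun_sum
      intro i _
      exact ((((EuclideanSpace.proj i : EuclideanSpace ℝ (Fin n) →L[ℝ] ℝ)).comp
            (ContinuousLinearMap.fst ℝ (EuclideanSpace ℝ (Fin n)) ℝ)).hasFDerivAt).smul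
          ((hasDerivAt_iff_hasFDerivAt.mp ((hv i).differentiable (by simp) t).hasDerivAt).comp
            (x, t) (hasFDerivAt_snd))
  -- bijectivity of fderiv on the axis
  have hbij0 : ∀ t : ℝ, Function.Bijective
      (fderiv ℝ (fun p : EuclideanSpace ℝ (Fin n) × ℝ =>
        γ p.2 + ∑ i : Fin n, p.1 i • v i p.2) (0, t)) := by
    intro t
    apply aux_bij_of_basis n γ v honb t
    intro p
    rw [(hder 0 t).fderiv]
    simp
  -- the set where fderiv is bijective contains an open tube
  set Φ' : EuclideanSpace ℝ (Fin n) × ℝ → EuclideanSpace ℝ (Fin (n + 1)) :=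
    fun p => γ p.2 + ∑ i : Fin n, p.1 i • v i p.2 with hΦ'
  have hfr : Module.finrank ℝ (EuclideanSpace ℝ (Fin (n + 1))) =
      Module.finrank ℝ (EuclideanSpace ℝ (Fin n) × ℝ) := by
    simp [finrank_euclideanSpace]
  let ι : EuclideanSpace ℝ (Fin (n + 1)) ≃L[ℝ] EuclideanSpace ℝ (Fin n) × ℝ :=
    ContinuousLinearEquiv.ofFinrankEq hfr
  set g : EuclideanSpace ℝ (Fin n) × ℝ →
      (EuclideanSpace ℝ (Fin n) × ℝ →L[ℝ] EuclideanSpace ℝ (Fin n) × ℝ) :=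
    fun p => (ι : EuclideanSpace ℝ (Fin (n + 1)) →L[ℝ]
      EuclideanSpace ℝ (Fin n) × ℝ).comp (fderiv ℝ Φ' p) with hg
  have hgcont : Continuous g :=
    continuous_const.clm_comp (hsmooth.continuous_fderiv (by simp))
  set U : Set (EuclideanSpace ℝ (Fin n) × ℝ) := g ⁻¹' {u | IsUnit u} with hU
  have hUopen : IsOpen U := Units.isOpen.preimage hgcont
  have hUbij : ∀ p ∈ U, Function.Bijective (fderiv ℝ Φ' p) := by
    intro p hp
    have hb : Function.Bijective (g p) := aux_bijective_of_isUnit _ hp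
    have : ⇑(fderiv ℝ Φ' p) = ι.symm ∘ ⇑(g p) := by
      funext x
      simp [hg]
    rw [this]
    exact ι.symm.bijective.comp hb
  have hUmem : ∀ t : ℝ, ((0 : EuclideanSpace ℝ (Fin n)), t) ∈ U := by
    intro t
    apply aux_isUnit_of_bijective
    have : ⇑(g (0, t)) = ι ∘ ⇑(fderiv ℝ Φ' (0, t)) := by funext x; simp [hg]
    rw [this]
    exact ι.bijective.comp (hbij0 t)
  -- tube lemma
  have hK0 : IsCompact (({(0 : EuclideanSpace ℝ (Fin n))} : Set _) ×ˢ Set.Icc a b) :=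
    isCompact_singleton.prod isCompact_Icc
  obtain ⟨ε, hε, hthick⟩ := hK0.exists_thickening_subset_open hUopen
    (by rintro ⟨x, t⟩ ⟨hx, ht⟩
        rw [Set.mem_singleton_iff] at hx
        subst hx
        exact hUmem t)
  have htube : ∀ p : EuclideanSpace ℝ (Fin n) × ℝ,
      p.1 ∈ Metric.closedBall (0 : EuclideanSpace ℝ (Fin n)) (ε / 2) →
      p.2 ∈ Set.Icc a b → Function.Bijective (fderiv ℝ Φ' p) := by
    rintro ⟨x, t⟩ hx ht
    apply hUbij
    apply hthick
    rw [Metric.mem_thickening_iff]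
    refine ⟨(0, t), ⟨rfl, ht⟩, ?_⟩
    rw [Prod.dist_eq]
    simp only [dist_self]
    have : dist x 0 ≤ ε / 2 := Metric.mem_closedBall.mp hx
    calc max (dist x 0) 0 ≤ ε / 2 := by
          apply max_le this (by linarith)
      _ < ε := by linarith
  -- injectivity on a small tube, by contradiction / compactness
  have hinj : ∃ δ > (0:ℝ), Set.InjOn Φ' (Metric.closedBall 0 δ ×ˢ Set.Icc a b) := by
    by_contra hcon
    push_neg at hcon
    have hfail : ∀ k : ℕ, ∃ p q : EuclideanSpace ℝ (Fin n) × ℝ,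
        p ∈ Metric.closedBall 0 (1/(k+1)) ×ˢ Set.Icc a b ∧
        q ∈ Metric.closedBall 0 (1/(k+1)) ×ˢ Set.Icc a b ∧ Φ' p = Φ' q ∧ p ≠ q := by
      intro k
      have hpos : (0:ℝ) < 1/(k+1) := by positivity
      by_contra h2
      push_neg at h2
      exact hcon (1/(k+1)) hpos fun p hp q hq he => h2 p q hp hq he
    choose p q hp hq heq hne using hfail
    have hS1 : IsCompact (Metric.closedBall (0 : EuclideanSpace ℝ (Fin n)) 1 ×ˢ Set.Icc a b) :=
      (isCompact_closedBall _ _).prod isCompact_Icc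
    have hle1 : ∀ k : ℕ, (1:ℝ)/(k+1) ≤ 1 := by
      intro k
      rw [div_le_one (by positivity)]
      have : (0:ℝ) ≤ k := Nat.cast_nonneg k
      linarith
    have hp1 : ∀ k, p k ∈ Metric.closedBall (0 : EuclideanSpace ℝ (Fin n)) 1 ×ˢ Set.Icc a b :=
      fun k => ⟨Metric.closedBall_subset_closedBall (hle1 k) (hp k).1, (hp k).2⟩
    have hq1 : ∀ k, q k ∈ Metric.closedBall (0 : EuclideanSpace ℝ (Fin n)) 1 ×ˢ Set.Icc a b :=
      fun k => ⟨Metric.closedBall_subset_closedBall (hle1 k) (hq k).1, (hq k).2⟩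
    obtain ⟨P, hPmem, φ, hφmono, hφtend⟩ := hS1.tendsto_subseq hp1
    obtain ⟨Q, hQmem, ψ, hψmono, hψtend⟩ := hS1.tendsto_subseq (fun k => hq1 (φ k))
    have hptend : Filter.Tendsto (fun k => p (φ (ψ k))) Filter.atTop (nhds P) :=
      hφtend.comp hψmono.tendsto_atTop
    have hqtend : Filter.Tendsto (fun k => q (φ (ψ k))) Filter.atTop (nhds Q) := hψtend
    have hmonole : ∀ k : ℕ, k ≤ φ (ψ k) := fun k => (hφmono.comp hψmono).le_apply
    have hbound : ∀ r : ℕ → EuclideanSpace ℝ (Fin n) × ℝ,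
        (∀ k : ℕ, r k ∈ Metric.closedBall 0 (1/((k:ℝ)+1)) ×ˢ Set.Icc a b) →
        Filter.Tendsto (fun k => (r (φ (ψ k))).1) Filter.atTop (nhds 0) := by
      intro r hr
      refine squeeze_zero_norm (fun k => ?_) tendsto_one_div_add_atTop_nhds_zero_nat
      · have h1 : ‖(r (φ (ψ k))).1‖ ≤ 1/((φ (ψ k) : ℝ)+1) := by
          have h := (hr (φ (ψ k))).1
          rwa [Metric.mem_closedBall, dist_zero_right] at h
        refine h1.trans ?_
        apply one_div_le_one_div_of_le (by positivity)
        have h2 : (k:ℝ) ≤ φ (ψ k) := by exact_mod_cast hmonole k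
        linarith
    have hP1 : P.1 = 0 :=
      tendsto_nhds_unique ((continuous_fst.tendsto P).comp hptend) (hbound p hp)
    have hQ1 : Q.1 = 0 :=
      tendsto_nhds_unique ((continuous_fst.tendsto Q).comp hqtend) (hbound q hq)
    have hΦPQ : Φ' P = Φ' Q :=
      tendsto_nhds_unique ((hsmooth.continuous.tendsto P).comp hptend)
        (((hsmooth.continuous.tendsto Q).comp hqtend).congr
          (fun k => (heq (φ (ψ k))).symm))
    have hax : ∀ t : ℝ, Φ' ((0 : EuclideanSpace ℝ (Fin n)), t) = γ t := by
      intro t; simp [hΦ']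
    have hP2Q2 : P.2 = Q.2 := by
      apply hγinj hPmem.2 hQmem.2
      have e1 : P = ((0 : EuclideanSpace ℝ (Fin n)), P.2) := Prod.ext hP1 rfl
      have e2 : Q = ((0 : EuclideanSpace ℝ (Fin n)), Q.2) := Prod.ext hQ1 rfl
      rw [← hax P.2, ← hax Q.2, ← e1, ← e2]
      exact hΦPQ
    have hPQ : P = Q := Prod.ext (hP1.trans hQ1.symm) hP2Q2
    have hbijP : Function.Bijective (fderiv ℝ Φ' P) := by
      have e1 : P = ((0 : EuclideanSpace ℝ (Fin n)), P.2) := Prod.ext hP1 rfl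
      rw [e1]; exact hbij0 P.2
    let eL : (EuclideanSpace ℝ (Fin n) × ℝ) ≃L[ℝ] EuclideanSpace ℝ (Fin (n+1)) :=
      LinearEquiv.toContinuousLinearEquiv
        (LinearEquiv.ofBijective
          ((fderiv ℝ Φ' P) : (EuclideanSpace ℝ (Fin n) × ℝ) →ₗ[ℝ]
            EuclideanSpace ℝ (Fin (n+1))) hbijP)
    have hcoe : (eL : (EuclideanSpace ℝ (Fin n) × ℝ) →L[ℝ] EuclideanSpace ℝ (Fin (n+1)))
        = fderiv ℝ Φ' P := by
      apply ContinuousLinearMap.ext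
      intro y
      simp [eL, ContinuousLinearEquiv.coe_coe, LinearEquiv.coe_toContinuousLinearEquiv,
        LinearEquiv.ofBijective_apply]
    have hstrict : HasStrictFDerivAt Φ'
        ((eL : (EuclideanSpace ℝ (Fin n) × ℝ) →L[ℝ] EuclideanSpace ℝ (Fin (n+1))) :
          (EuclideanSpace ℝ (Fin n) × ℝ) →L[ℝ] EuclideanSpace ℝ (Fin (n+1))) P := by
      rw [hcoe]
      exact hsmooth.hasStrictFDerivAt (by simp)
    set e := hstrict.toOpenPartialHomeomorph Φ' with he
    have hPsrc : P ∈ e.source := hstrict.mem_toOpenPartialHomeomorph_source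
    have hinjsrc : Set.InjOn Φ' e.source := by
      have h := e.injOn
      rwa [hstrict.toOpenPartialHomeomorph_coe] at h
    have hev : ∀ᶠ k in Filter.atTop,
        p (φ (ψ k)) ∈ e.source ∧ q (φ (ψ k)) ∈ e.source := by
      apply Filter.Eventually.and
      · exact hptend.eventually (e.open_source.eventually_mem hPsrc)
      · have hq' := hqtend
        rw [← hPQ] at hq'
        exact hq'.eventually (e.open_source.eventually_mem hPsrc)
    obtain ⟨k, hk1, hk2⟩ := hev.exists
    exact hne (φ (ψ k)) (hinjsrc hk1 hk2 (heq (φ (ψ k))))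
  -- conclusion
  obtain ⟨δi, hδi, hδinj⟩ := hinj
  refine ⟨min δi (ε/2), lt_min hδi (by linarith), fun δ hδpos hδle => ?_⟩
  constructor
  · apply hδinj.mono
    exact Set.prod_mono
      (Metric.closedBall_subset_closedBall (hδle.trans (min_le_left _ _))) subset_rfl
  · rintro ⟨x, t⟩ ⟨hx, ht⟩
    exact htube (x, t)
      (Metric.closedBall_subset_closedBall (hδle.trans (min_le_right _ _)) hx) ht
end
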